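/- arXiv:2405.18360 — 6 statements merged into one kernel-verified Lean document; each statement's English description precedes it below -/
import Mathlib

section
/- For every finite n ≥ 1, the equivalence relations F_n (on X_n) and =^{+n} are Borel bireducible: F_n ≤_B =^{+n} and =^{+n} ≤_B F_n. -/
open MeasureTheory

/-- Iterated powerset type over Cantor space: `It 0 = 2^ℕ`, `It (m+1) = Set (It m)`. -/
def It : ℕ → Type
  | 0 => ℕ → Bool
  | m + 1 => Set (It m)

/-- `aF x m l` is the set `a^{x,l}_{m+1}` from the recursive construction. -/
def aF (x : ℕ → ℕ → ℕ → Bool) : (m : ℕ) → ℕ → It (m + 1)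
  | 0, l => {z : It 0 | ∃ k, x 1 l k = true ∧ z = x 0 k}
  | m + 1, l => {z : It (m + 1) | ∃ k, x (m + 2) l k = true ∧ z = aF x m k}

/-- `AS x m` is the set `A^x_{m+1}` from the recursive construction. -/
def AS (x : ℕ → ℕ → ℕ → Bool) : (m : ℕ) → It (m + 1)
  | 0 => {z : It 0 | ∃ k, z = x 0 k}
  | m + 1 => {z : It (m + 1) | ∃ k, z = aF x m k}

/-- Extension of a finite tuple to an infinite sequence, by a junk value. -/
def extFin {n : ℕ} (x : Fin n → ℕ → ℕ → Bool) : ℕ → ℕ → ℕ → Bool :=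
  fun i => if h : i < n then x ⟨i, h⟩ else fun _ _ => true

/-- The domain `X_n ⊆ ((2^ℕ)^ℕ)^n`. -/
def XSet (n : ℕ) : Set (Fin n → ℕ → ℕ → Bool) :=
  {x | ∀ (i : ℕ) (_ : 1 ≤ i) (hn : i < n),
    (∀ m, ∃ k, x ⟨i, hn⟩ k m = true) ∧
    (∀ k, ∃ m, x ⟨i, hn⟩ k m = true) ∧
    (∀ k l₁ l₂,
      x ⟨i - 1, Nat.lt_of_le_of_lt (Nat.sub_le i 1) hn⟩ l₁ =
        x ⟨i - 1, Nat.lt_of_le_of_lt (Nat.sub_le i 1) hn⟩ l₂ →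
      x ⟨i, hn⟩ k l₁ = x ⟨i, hn⟩ k l₂)}

/-- The domain `X_ω ⊆ ((2^ℕ)^ℕ)^ω`. -/
def XInf : Set (ℕ → ℕ → ℕ → Bool) :=
  {x | ∀ (i : ℕ) (_ : 1 ≤ i),
    (∀ m, ∃ k, x i k m = true) ∧
    (∀ k, ∃ m, x i k m = true) ∧
    (∀ k l₁ l₂, x (i - 1) l₁ = x (i - 1) l₂ → x i k l₁ = x i k l₂)}

/-- The relation `F_n` (`x F_n y ↔ A^x_n = A^y_n`), as a relation on the ambient space.
For `n = 0` this is the trivial (full) relation. -/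
def Ffin (n : ℕ) (x y : Fin n → ℕ → ℕ → Bool) : Prop :=
  AS (extFin x) (n - 1) = AS (extFin y) (n - 1)

/-- The relation `F_ω` : `x F_ω y ↔ ∀ k ≥ 1, A^x_k = A^y_k`. -/
def Fomega (x y : ℕ → ℕ → ℕ → Bool) : Prop :=
  ∀ m, AS x m = AS y m

/-- The projection `u^n_k` to the first `k` coordinates. -/
def projFin {n : ℕ} (k : ℕ) (h : k ≤ n) (x : Fin n → ℕ → ℕ → Bool) :
    Fin k → ℕ → ℕ → Bool :=
  fun i => x (Fin.castLE h i)

/-- The projection `u^ω_k` to the first `k` coordinates. -/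
def projInf (k : ℕ) (x : ℕ → ℕ → ℕ → Bool) : Fin k → ℕ → ℕ → Bool :=
  fun i => x i.val

theorem projFin_mem {n k : ℕ} (h : k ≤ n) {x : Fin n → ℕ → ℕ → Bool}
    (hx : x ∈ XSet n) : projFin k h x ∈ XSet k :=
  fun i h1 hik => hx i h1 (lt_of_lt_of_le hik h)

theorem projInf_mem (k : ℕ) {x : ℕ → ℕ → ℕ → Bool} (hx : x ∈ XInf) :
    projInf k x ∈ XSet k :=
  fun i h1 _ => hx i h1

def projSubFin {n : ℕ} (k : ℕ) (h : k ≤ n) (x : ↥(XSet n)) : ↥(XSet k) :=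
  ⟨projFin k h x.1, projFin_mem h x.2⟩

def projSubInf (k : ℕ) (x : ↥XInf) : ↥(XSet k) :=
  ⟨projInf k x.1, projInf_mem k x.2⟩

/-- The domains of the iterated Friedman–Stanley jumps. -/
def fsSpace : ℕ → Type
  | 0 => ℕ → Bool
  | n + 1 => ℕ → fsSpace n

/-- The Friedman–Stanley jump of an equivalence relation. -/
def fsJump {X : Type} (E : X → X → Prop) (x y : ℕ → X) : Prop :=
  (∀ n, ∃ m, E (x n) (y m)) ∧ (∀ n, ∃ m, E (y n) (x m))

/-- The iterated Friedman–Stanley jump `=^{+n}`. -/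
def fsIter : (n : ℕ) → fsSpace n → fsSpace n → Prop
  | 0 => Eq
  | n + 1 => fsJump (fsIter n)

instance fsSpaceTopologicalSpace : (n : ℕ) → TopologicalSpace (fsSpace n)
  | 0 => inferInstanceAs (TopologicalSpace (ℕ → Bool))
  | n + 1 =>
    letI := fsSpaceTopologicalSpace n
    inferInstanceAs (TopologicalSpace (ℕ → fsSpace n))

instance fsSpaceMeasurableSpace : (n : ℕ) → MeasurableSpace (fsSpace n)
  | 0 => inferInstanceAs (MeasurableSpace (ℕ → Bool))
  | n + 1 =>
    letI := fsSpaceMeasurableSpace n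
    inferInstanceAs (MeasurableSpace (ℕ → fsSpace n))

/-- `=^{+ω}`, the product of the `=^{+k}`. -/
def fsOmega (x y : ∀ k, fsSpace k) : Prop :=
  ∀ k, fsIter k (x k) (y k)

/-- Borel reducibility of equivalence relations. -/
def BorelReducible {X Y : Type*} [MeasurableSpace X] [MeasurableSpace Y]
    (E : X → X → Prop) (F : Y → Y → Prop) : Prop :=
  ∃ f : X → Y, Measurable f ∧ ∀ a b, E a b ↔ F (f a) (f b)

/-- The Polish topology of pointwise convergence on the symmetric group of a
(countable, discrete) set. -/
def permTopology (A : Type*) : TopologicalSpace (Equiv.Perm A) :=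
  TopologicalSpace.induced (fun g => (g : A → A))
    (@Pi.topologicalSpace A (fun _ => A) fun _ => ⊥)

/-- The orbit equivalence relation of an action. -/
def OrbitRel {G Y : Type*} (act : G → Y → Y) (y₁ y₂ : Y) : Prop :=
  ∃ g, act g y₁ = y₂

/-- Classifiable by countable structures: Borel reducible to the orbit equivalence
relation of a continuous action of `S_∞` on a Polish space. -/
def ClassifiableByCountableStructures {X : Type*} [MeasurableSpace X]
    (E : X → X → Prop) : Prop :=
  ∃ (Y : Type) (_ : TopologicalSpace Y) (_ : MeasurableSpace Y),
    PolishSpace Y ∧ BorelSpace Y ∧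
    ∃ act : Equiv.Perm ℕ → Y → Y,
      (∀ y, act 1 y = y) ∧
      (∀ g h y, act (g * h) y = act g (act h y)) ∧
      (letI := permTopology ℕ
       Continuous fun p : Equiv.Perm ℕ × Y => act p.1 p.2) ∧
      BorelReducible E (OrbitRel act)

/-- `E` is prime to `F`. -/
def PrimeTo {X Y : Type*} [MeasurableSpace X] [MeasurableSpace Y]
    (E : X → X → Prop) (F : Y → Y → Prop) : Prop :=
  ∀ f : X → Y, Measurable f → (∀ a b, E a b → F (f a) (f b)) →
    ∃ y : Y, BorelReducible E (fun a b : {x : X // F (f x) y} => E a.1 b.1)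

/-- A sequence of elements of Cantor space is separated if any two distinct naturals
are separated by some member of the sequence. -/
def SeqSeparated (z : ℕ → ℕ → Bool) : Prop :=
  ∀ a b : ℕ, a ≠ b → ∃ i, z i a ≠ z i b


/-! ### Auxiliary machinery -/

section Aux

/-- Set-typed version of `aF`. -/
def aFS (w : ℕ → ℕ → ℕ → Bool) : (m : ℕ) → ℕ → Set (It m)
  | 0, l => {z : It 0 | ∃ k, w 1 l k = true ∧ z = w 0 k}
  | m + 1, l => {z : It (m + 1) | ∃ k, w (m + 2) l k = true ∧ z = aFS w m k}

/-- Set-typed version of `AS`. -/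
def ASS (w : ℕ → ℕ → ℕ → Bool) : (m : ℕ) → Set (It m)
  | 0 => {z : It 0 | ∃ k, z = w 0 k}
  | m + 1 => {z : It (m + 1) | ∃ k, z = aFS w m k}

lemma aF_as (w : ℕ → ℕ → ℕ → Bool) : ∀ m l, aF w m l = aFS w m l := by
  intro m
  induction m with
  | zero => intro l; rfl
  | succ m ih =>
    intro l
    show aF w (m+1) l = aFS w (m+1) l
    simp only [aF, aFS, ih]; rfl

lemma AS_as (w : ℕ → ℕ → ℕ → Bool) : ∀ m, AS w m = ASS w m := by
  intro m
  cases m with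
  | zero => rfl
  | succ m => show AS w (m+1) = ASS w (m+1); simp only [AS, ASS, aF_as]; rfl

/-- least element of a row -/
noncomputable def leastT (w : ℕ → ℕ → ℕ → Bool) (i k : ℕ) : ℕ := sInf {l | w i k l = true}

/-- selection function enumerating a row -/
noncomputable def selT (w : ℕ → ℕ → ℕ → Bool) (i k j : ℕ) : ℕ :=
  if w i k j = true then j else leastT w i k

lemma selT_mem {w : ℕ → ℕ → ℕ → Bool} {i k : ℕ} (h : ∃ l, w i k l = true) (j : ℕ) :
    w i k (selT w i k j) = true := by
  unfold selT
  split
  · assumption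
  · exact Nat.sInf_mem h

lemma selT_eq_self {w : ℕ → ℕ → ℕ → Bool} {i k l : ℕ} (h : w i k l = true) :
    selT w i k l = l := if_pos h

/-- builder: `gB w m k` is the element of `fsSpace m` coding the level-`m` object `k`. -/
noncomputable def gB (w : ℕ → ℕ → ℕ → Bool) : (m : ℕ) → ℕ → fsSpace m
  | 0, k => w 0 k
  | m + 1, k => fun j => gB w m (selT w (m + 1) k j)

/-- cross combinatorial equivalence of codes relative to two matrices. -/
def CEx (w w' : ℕ → ℕ → ℕ → Bool) : ℕ → ℕ → ℕ → Prop
  | 0, k, k' => w 0 k = w' 0 k'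
  | m + 1, k, k' =>
      (∀ l, w (m + 1) k l = true → ∃ l', w' (m + 1) k' l' = true ∧ CEx w w' m l l') ∧
      (∀ l', w' (m + 1) k' l' = true → ∃ l, w (m + 1) k l = true ∧ CEx w w' m l l')

lemma aFS_eq_iff (w w' : ℕ → ℕ → ℕ → Bool) :
    ∀ m k k', aFS w m k = aFS w' m k' ↔ CEx w w' (m + 1) k k' := by
  intro m
  induction m with
  | zero =>
    intro k k'
    constructor
    · intro h
      constructor
      · intro l hl
        have : w 0 l ∈ aFS w 0 k := ⟨l, hl, rfl⟩
        rw [h] at this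
        obtain ⟨l', hl', hz⟩ := this
        exact ⟨l', hl', hz⟩
      · intro l' hl'
        have : w' 0 l' ∈ aFS w' 0 k' := ⟨l', hl', rfl⟩
        rw [← h] at this
        obtain ⟨l, hl, hz⟩ := this
        exact ⟨l, hl, hz.symm⟩
    · rintro ⟨h1, h2⟩
      ext z
      constructor
      · rintro ⟨l, hl, rfl⟩
        obtain ⟨l', hl', he⟩ := h1 l hl
        exact ⟨l', hl', he⟩
      · rintro ⟨l', hl', rfl⟩
        obtain ⟨l, hl, he⟩ := h2 l' hl'
        exact ⟨l, hl, he.symm⟩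
  | succ m ih =>
    intro k k'
    constructor
    · intro h
      constructor
      · intro l hl
        have : aFS w m l ∈ aFS w (m + 1) k := ⟨l, hl, rfl⟩
        rw [h] at this
        obtain ⟨l', hl', hz⟩ := this
        exact ⟨l', hl', (ih l l').1 hz⟩
      · intro l' hl'
        have : aFS w' m l' ∈ aFS w' (m + 1) k' := ⟨l', hl', rfl⟩
        rw [← h] at this
        obtain ⟨l, hl, hz⟩ := this
        exact ⟨l, hl, (ih l l').1 hz.symm⟩
    · rintro ⟨h1, h2⟩
      ext z
      constructor
      · rintro ⟨l, hl, rfl⟩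
        obtain ⟨l', hl', he⟩ := h1 l hl
        exact ⟨l', hl', (ih l l').2 he⟩
      · rintro ⟨l', hl', rfl⟩
        obtain ⟨l, hl, he⟩ := h2 l' hl'
        exact ⟨l, hl, ((ih l l').2 he).symm⟩

lemma ASS_eq_iff (w w' : ℕ → ℕ → ℕ → Bool) (m : ℕ) :
    ASS w m = ASS w' m ↔
      (∀ k, ∃ k', CEx w w' m k k') ∧ (∀ k', ∃ k, CEx w w' m k k') := by
  cases m with
  | zero =>
    constructor
    · intro h
      constructor
      · intro k
        have : w 0 k ∈ ASS w 0 := ⟨k, rfl⟩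
        rw [h] at this
        obtain ⟨k', hk'⟩ := this
        exact ⟨k', hk'⟩
      · intro k'
        have : w' 0 k' ∈ ASS w' 0 := ⟨k', rfl⟩
        rw [← h] at this
        obtain ⟨k, hk⟩ := this
        exact ⟨k, hk.symm⟩
    · rintro ⟨h1, h2⟩
      ext z
      constructor
      · rintro ⟨k, rfl⟩
        obtain ⟨k', he⟩ := h1 k
        exact ⟨k', he⟩
      · rintro ⟨k', rfl⟩
        obtain ⟨k, he⟩ := h2 k'
        exact ⟨k, he.symm⟩
  | succ m =>
    constructor
    · intro h
      constructor
      · intro k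
        have : aFS w m k ∈ ASS w (m + 1) := ⟨k, rfl⟩
        rw [h] at this
        obtain ⟨k', hk'⟩ := this
        exact ⟨k', (aFS_eq_iff w w' m k k').1 hk'⟩
      · intro k'
        have : aFS w' m k' ∈ ASS w' (m + 1) := ⟨k', rfl⟩
        rw [← h] at this
        obtain ⟨k, hk⟩ := this
        exact ⟨k, (aFS_eq_iff w w' m k k').1 hk.symm⟩
    · rintro ⟨h1, h2⟩
      ext z
      constructor
      · rintro ⟨k, rfl⟩
        obtain ⟨k', he⟩ := h1 k
        exact ⟨k', (aFS_eq_iff w w' m k k').2 he⟩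
      · rintro ⟨k', rfl⟩
        obtain ⟨k, he⟩ := h2 k'
        exact ⟨k, ((aFS_eq_iff w w' m k k').2 he).symm⟩

lemma gB_succ (w : ℕ → ℕ → ℕ → Bool) (m k j : ℕ) :
    gB w (m + 1) k j = gB w m (selT w (m + 1) k j) := by
  simp [gB]

lemma fsIter_symm : ∀ n (a b : fsSpace n), fsIter n a b → fsIter n b a
  | 0, _, _, h => h.symm
  | n + 1, _, _, h =>
    ⟨h.2, h.1⟩

lemma gB_iff (w w' : ℕ → ℕ → ℕ → Bool) :
    ∀ m, (∀ i, 1 ≤ i → i ≤ m → ∀ k, ∃ l, w i k l = true) →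
      (∀ i, 1 ≤ i → i ≤ m → ∀ k, ∃ l, w' i k l = true) →
      ∀ k k', fsIter m (gB w m k) (gB w' m k') ↔ CEx w w' m k k' := by
  intro m
  induction m with
  | zero => intro _ _ k k'; exact Iff.rfl
  | succ m ih =>
    intro hw hw' k k'
    have hwm := fun i h1 h2 => hw i h1 (Nat.le_succ_of_le h2)
    have hw'm := fun i h1 h2 => hw' i h1 (Nat.le_succ_of_le h2)
    have hrow : ∀ j, w (m+1) k (selT w (m+1) k j) = true :=
      fun j => selT_mem (hw (m+1) (Nat.le_add_left 1 m) le_rfl k) j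
    have hrow' : ∀ j, w' (m+1) k' (selT w' (m+1) k' j) = true :=
      fun j => selT_mem (hw' (m+1) (Nat.le_add_left 1 m) le_rfl k') j
    constructor
    · rintro ⟨h1, h2⟩
      constructor
      · intro l hl
        obtain ⟨j', hj'⟩ := h1 l
        rw [gB_succ, gB_succ, selT_eq_self hl] at hj'
        exact ⟨selT w' (m+1) k' j', hrow' j', (ih hwm hw'm _ _).1 hj'⟩
      · intro l' hl'
        obtain ⟨j, hj⟩ := h2 l'
        rw [gB_succ, gB_succ, selT_eq_self hl'] at hj
        exact ⟨selT w (m+1) k j, hrow j, (ih hwm hw'm _ _).1 (fsIter_symm m _ _ hj)⟩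
    · rintro ⟨h1, h2⟩
      constructor
      · intro j
        obtain ⟨l', hl', he⟩ := h1 (selT w (m+1) k j) (hrow j)
        refine ⟨l', ?_⟩
        rw [gB_succ, gB_succ, selT_eq_self hl']
        exact (ih hwm hw'm _ _).2 he
      · intro j'
        obtain ⟨l, hl, he⟩ := h2 (selT w' (m+1) k' j') (hrow' j')
        refine ⟨l, ?_⟩
        rw [gB_succ, gB_succ, selT_eq_self hl]
        exact fsIter_symm m _ _ ((ih hwm hw'm _ _).2 he)


/-! ### Direction 2: from `fsSpace n` to codes -/

/-- atom extraction: `Atn j z l` is the atom of `z` coded by the nested-pair code `l`. -/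
def Atn : (j : ℕ) → fsSpace j → ℕ → (ℕ → Bool)
  | 0, z, _ => z
  | j + 1, z, l => Atn j (z (Nat.unpair l).1) (Nat.unpair l).2

/-- append a coordinate to a nested-pair code of a length-`m` tuple. -/
def apc : ℕ → ℕ → ℕ → ℕ
  | 0, _, j => Nat.pair j 0
  | m + 1, l, j => Nat.pair (Nat.unpair l).1 (apc m (Nat.unpair l).2 j)

/-- cross equivalence of codes at a level, for `y y' : fsSpace n`.
Level-`i` codes denote tuples of length `n - i`. -/
def CEy (n : ℕ) (y y' : fsSpace n) : ℕ → ℕ → ℕ → Prop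
  | 0, l, l' => Atn n y l = Atn n y' l'
  | i + 1, l, l' =>
      (∀ j, ∃ j', CEy n y y' i (apc (n - (i + 1)) l j) (apc (n - (i + 1)) l' j')) ∧
      (∀ j', ∃ j, CEy n y y' i (apc (n - (i + 1)) l j) (apc (n - (i + 1)) l' j'))

lemma CEy_symm {n : ℕ} {y y' : fsSpace n} :
    ∀ i l l', CEy n y y' i l l' → CEy n y' y i l' l := by
  intro i
  induction i with
  | zero => intro l l' h; exact h.symm
  | succ i ih =>
    rintro l l' ⟨h1, h2⟩
    constructor
    · intro j'
      obtain ⟨j, hj⟩ := h2 j'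
      exact ⟨j, ih _ _ hj⟩
    · intro j
      obtain ⟨j', hj⟩ := h1 j
      exact ⟨j', ih _ _ hj⟩

lemma CEy_trans {n : ℕ} {y₁ y₂ y₃ : fsSpace n} :
    ∀ i a b c, CEy n y₁ y₂ i a b → CEy n y₂ y₃ i b c → CEy n y₁ y₃ i a c := by
  intro i
  induction i with
  | zero => intro a b c h1 h2; exact h1.trans h2
  | succ i ih =>
    rintro a b c ⟨h1, h2⟩ ⟨g1, g2⟩
    constructor
    · intro j
      obtain ⟨j', hj⟩ := h1 j
      obtain ⟨j'', hj'⟩ := g1 j'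
      exact ⟨j'', ih _ _ _ hj hj'⟩
    · intro j''
      obtain ⟨j', hj'⟩ := g2 j''
      obtain ⟨j, hj⟩ := h2 j'
      exact ⟨j, ih _ _ _ hj hj'⟩

/-- agreement of nested pair codes to depth `d`. -/
def agr : ℕ → ℕ → ℕ → Prop
  | 0, _, _ => True
  | d + 1, a, b =>
      (Nat.unpair a).1 = (Nat.unpair b).1 ∧ agr d (Nat.unpair a).2 (Nat.unpair b).2

lemma agr_refl : ∀ d a, agr d a a := by
  intro d
  induction d with
  | zero => intro a; trivial
  | succ d ih => intro a; exact ⟨rfl, ih _⟩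

lemma agr_At : ∀ (j : ℕ) (z : fsSpace j) (a b : ℕ), agr j a b → Atn j z a = Atn j z b := by
  intro j
  induction j with
  | zero => intro z a b _; rfl
  | succ j ih =>
    rintro z a b ⟨h1, h2⟩
    show Atn j (z (Nat.unpair a).1) (Nat.unpair a).2 = _
    rw [h1]
    exact ih _ _ _ h2

lemma agr_apc : ∀ d a b (j : ℕ), agr d a b → agr (d + 1) (apc d a j) (apc d b j) := by
  intro d
  induction d with
  | zero => intro a b j _; exact agr_refl _ _
  | succ d ih =>
    rintro a b j ⟨h1, h2⟩
    exact ⟨by simp [apc, Nat.unpair_pair, h1], by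
      simp only [apc, Nat.unpair_pair]
      exact ih _ _ j h2⟩

lemma agr_CEy {n : ℕ} {y : fsSpace n} :
    ∀ i, i ≤ n → ∀ a b, agr (n - i) a b → CEy n y y i a b := by
  intro i
  induction i with
  | zero => intro _ a b h; exact agr_At n y a b (by simpa using h)
  | succ i ih =>
    intro hin a b h
    have hi : i ≤ n := Nat.le_of_succ_le hin
    have hd : (n - (i + 1)) + 1 = n - i := by omega
    constructor
    · intro j
      refine ⟨j, ih hi _ _ ?_⟩
      rw [← hd]
      exact agr_apc _ _ _ j h
    · intro j'
      refine ⟨j', ih hi _ _ ?_⟩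
      rw [← hd]
      exact agr_apc _ _ _ j' h

lemma CEy_refl {n : ℕ} {y : fsSpace n} (i : ℕ) (hi : i ≤ n) (a : ℕ) : CEy n y y i a a :=
  agr_CEy i hi a a (agr_refl _ _)

/-- prefix code (drop the last coordinate of a length-`(m+1)` tuple code). -/
def pcode : ℕ → ℕ → ℕ
  | 0, _ => 0
  | m + 1, l => Nat.pair (Nat.unpair l).1 (pcode m (Nat.unpair l).2)

/-- last coordinate of a length-`(m+1)` tuple code. -/
def lcode : ℕ → ℕ → ℕ
  | 0, l => (Nat.unpair l).1
  | m + 1, l => lcode m (Nat.unpair l).2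

lemma apc_pcode_lcode : ∀ m l, agr (m + 1) (apc m (pcode m l) (lcode m l)) l := by
  intro m
  induction m with
  | zero =>
    intro l
    exact ⟨by simp [apc, pcode, lcode, Nat.unpair_pair], trivial⟩
  | succ m ih =>
    intro l
    refine ⟨by simp [apc, pcode, Nat.unpair_pair], ?_⟩
    simp only [apc, pcode, lcode, Nat.unpair_pair]
    exact ih _


lemma CEy_down (n : ℕ) (y y' : fsSpace (n + 2)) :
    ∀ i, i ≤ n → ∀ l l', CEy (n + 2) y y' i l l' ↔
      CEy (n + 1) (y (Nat.unpair l).1) (y' (Nat.unpair l').1) i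
        (Nat.unpair l).2 (Nat.unpair l').2 := by
  intro i
  induction i with
  | zero => intro _ l l'; exact Iff.rfl
  | succ i ih =>
    intro hin l l'
    have hi : i ≤ n := Nat.le_of_succ_le hin
    have ha : ∀ a j, apc (n + 2 - (i + 1)) a j =
        Nat.pair (Nat.unpair a).1 (apc (n + 1 - (i + 1)) (Nat.unpair a).2 j) := by
      intro a j
      have e1 : n + 2 - (i + 1) = (n + 1 - (i + 1)) + 1 := by omega
      rw [e1]
      rfl
    show ((∀ j, ∃ j', CEy (n+2) y y' i (apc (n + 2 - (i+1)) l j) (apc (n + 2 - (i+1)) l' j')) ∧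
          (∀ j', ∃ j, CEy (n+2) y y' i (apc (n + 2 - (i+1)) l j) (apc (n + 2 - (i+1)) l' j'))) ↔
         ((∀ j, ∃ j', CEy (n+1) (y (Nat.unpair l).1) (y' (Nat.unpair l').1) i
              (apc (n + 1 - (i+1)) (Nat.unpair l).2 j) (apc (n + 1 - (i+1)) (Nat.unpair l').2 j')) ∧
          (∀ j', ∃ j, CEy (n+1) (y (Nat.unpair l).1) (y' (Nat.unpair l').1) i
              (apc (n + 1 - (i+1)) (Nat.unpair l).2 j) (apc (n + 1 - (i+1)) (Nat.unpair l').2 j')))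
    simp only [ha]
    constructor
    · rintro ⟨h1, h2⟩
      refine ⟨fun j => ?_, fun j' => ?_⟩
      · obtain ⟨j', hj⟩ := h1 j
        refine ⟨j', ?_⟩
        have := (ih hi _ _).1 hj
        simpa [Nat.unpair_pair] using this
      · obtain ⟨j, hj⟩ := h2 j'
        refine ⟨j, ?_⟩
        have := (ih hi _ _).1 hj
        simpa [Nat.unpair_pair] using this
    · rintro ⟨h1, h2⟩
      refine ⟨fun j => ?_, fun j' => ?_⟩
      · obtain ⟨j', hj⟩ := h1 j
        refine ⟨j', (ih hi _ _).2 ?_⟩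
        simpa [Nat.unpair_pair] using hj
      · obtain ⟨j, hj⟩ := h2 j'
        refine ⟨j, (ih hi _ _).2 ?_⟩
        simpa [Nat.unpair_pair] using hj

lemma CEy_top : ∀ n (y y' : fsSpace (n + 1)) k k',
    CEy (n + 1) y y' n k k' ↔ fsIter n (y (Nat.unpair k).1) (y' (Nat.unpair k').1) := by
  intro n
  induction n with
  | zero => intro y y' k k'; exact Iff.rfl
  | succ n ih =>
    intro y y' k k'
    have ha : ∀ a j, apc (n + 2 - (n + 1)) a j =
        Nat.pair (Nat.unpair a).1 (Nat.pair j 0) := by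
      intro a j
      have e1 : n + 2 - (n + 1) = 1 := by omega
      rw [e1]
      rfl
    show ((∀ j, ∃ j', CEy (n+2) y y' n (apc (n + 2 - (n+1)) k j) (apc (n + 2 - (n+1)) k' j')) ∧
          (∀ j', ∃ j, CEy (n+2) y y' n (apc (n + 2 - (n+1)) k j) (apc (n + 2 - (n+1)) k' j'))) ↔
         ((∀ j, ∃ j', fsIter n (y (Nat.unpair k).1 j) (y' (Nat.unpair k').1 j')) ∧
          (∀ j', ∃ j, fsIter n (y' (Nat.unpair k').1 j') (y (Nat.unpair k).1 j)))
    simp only [ha]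
    have key : ∀ a b j j', CEy (n+2) y y' n
        (Nat.pair (Nat.unpair a).1 (Nat.pair j 0)) (Nat.pair (Nat.unpair b).1 (Nat.pair j' 0)) ↔
        fsIter n (y (Nat.unpair a).1 j) (y' (Nat.unpair b).1 j') := by
      intro a b j j'
      rw [CEy_down n y y' n le_rfl]
      simp only [Nat.unpair_pair]
      rw [ih]
      simp [Nat.unpair_pair]
    constructor
    · rintro ⟨h1, h2⟩
      refine ⟨fun j => ?_, fun j' => ?_⟩
      · obtain ⟨j', hj⟩ := h1 j
        exact ⟨j', (key k k' j j').1 hj⟩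
      · obtain ⟨j, hj⟩ := h2 j'
        exact ⟨j, fsIter_symm n _ _ ((key k k' j j').1 hj)⟩
    · rintro ⟨h1, h2⟩
      refine ⟨fun j => ?_, fun j' => ?_⟩
      · obtain ⟨j', hj⟩ := h1 j
        exact ⟨j', (key k k' j j').2 hj⟩
      · obtain ⟨j, hj⟩ := h2 j'
        exact ⟨j, (key k k' j j').2 (fsIter_symm n _ _ hj)⟩


lemma CEx_symm (w w' : ℕ → ℕ → ℕ → Bool) :
    ∀ m k k', CEx w w' m k k' → CEx w' w m k' k := by
  intro m
  induction m with
  | zero => intro k k' h; exact h.symm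
  | succ m ih =>
    rintro k k' ⟨h1, h2⟩
    refine ⟨fun l' hl' => ?_, fun l hl => ?_⟩
    · obtain ⟨l, hl, he⟩ := h2 l' hl'
      exact ⟨l, hl, ih _ _ he⟩
    · obtain ⟨l', hl', he⟩ := h1 l hl
      exact ⟨l', hl', ih _ _ he⟩

/-- semantic membership relation on codes. -/
def MemR (n : ℕ) (y : fsSpace n) (i k l : ℕ) : Prop :=
  ∃ j, CEy n y y (i - 1) (apc (n - i) k j) l

open Classical in
/-- the reduction map from `fsSpace n` to `X_n`. -/
noncomputable def xF (n : ℕ) (y : fsSpace n) : Fin n → ℕ → ℕ → Bool :=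
  fun i k l => if i.val = 0 then Atn n y k l else if MemR n y i.val k l then true else false

lemma xF_zero {n : ℕ} (y : fsSpace n) (h : (0 : ℕ) < n) (k : ℕ) :
    xF n y ⟨0, h⟩ k = Atn n y k := by
  funext l
  simp [xF]

lemma xF_pos {n : ℕ} (y : fsSpace n) {i : ℕ} (hi : 1 ≤ i) (h : i < n) (k l : ℕ) :
    xF n y ⟨i, h⟩ k l = true ↔ MemR n y i k l := by
  simp only [xF]
  rw [if_neg (by omega)]
  by_cases hm : MemR n y i k l <;> simp [hm]

lemma xF_mem {n : ℕ} (hn : 1 ≤ n) (y : fsSpace n) : xF n y ∈ XSet n := by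
  intro i hi hin
  have hi1n : i - 1 ≤ n := by omega
  have hsub : (n - i) + 1 = n - (i - 1) := by omega
  refine ⟨?_, ?_, ?_⟩
  · -- every code is a member of some set
    intro l
    refine ⟨pcode (n - i) l, ?_⟩
    rw [xF_pos y hi hin]
    refine ⟨lcode (n - i) l, ?_⟩
    apply agr_CEy (i - 1) hi1n
    rw [← hsub]
    exact apc_pcode_lcode _ _
  · -- every set is nonempty
    intro k
    refine ⟨apc (n - i) k 0, ?_⟩
    rw [xF_pos y hi hin]
    exact ⟨0, CEy_refl (i - 1) hi1n _⟩
  · -- extensionality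
    intro k l₁ l₂ hl
    have hE : CEy n y y (i - 1) l₁ l₂ := by
      rcases Nat.lt_or_ge i 2 with hc | hc
      · -- i = 1
        have hieq : i = 1 := by omega
        subst hieq
        have := congrArg (fun f => f) hl
        have h0 : Atn n y l₁ = Atn n y l₂ := by
          have e1 := xF_zero y (by omega : (0:ℕ) < n) l₁
          have e2 := xF_zero y (by omega : (0:ℕ) < n) l₂
          calc Atn n y l₁ = xF n y ⟨1 - 1, _⟩ l₁ := e1.symm
            _ = xF n y ⟨1 - 1, _⟩ l₂ := hl
            _ = Atn n y l₂ := e2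
        exact h0
      · -- i ≥ 2
        have hmem : ∀ l, MemR n y (i - 1) l₁ l ↔ MemR n y (i - 1) l₂ l := by
          intro l
          have hi1 : 1 ≤ i - 1 := by omega
          have hi1n' : i - 1 < n := by omega
          rw [← xF_pos y hi1 hi1n' l₁ l, ← xF_pos y hi1 hi1n' l₂ l]
          rw [hl]
        have hstep : i - 1 = (i - 2) + 1 := by omega
        rw [hstep]
        have hapc : n - ((i - 2) + 1) = n - (i - 1) := by omega
        constructor
        · intro j
          have hm1 : MemR n y (i - 1) l₁ (apc (n - (i - 1)) l₁ j) :=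
            ⟨j, CEy_refl (i - 1 - 1) (by omega) _⟩
          obtain ⟨j', hj'⟩ := (hmem _).1 hm1
          refine ⟨j', ?_⟩
          rw [hapc]
          have : CEy n y y (i - 2) (apc (n - (i-1)) l₂ j') (apc (n - (i-1)) l₁ j) := by
            have := hj'
            rwa [(by omega : i - 1 - 1 = i - 2)] at this
          exact CEy_symm _ _ _ this
        · intro j'
          have hm2 : MemR n y (i - 1) l₂ (apc (n - (i - 1)) l₂ j') :=
            ⟨j', CEy_refl (i - 1 - 1) (by omega) _⟩
          obtain ⟨j, hj⟩ := (hmem _).2 hm2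
          refine ⟨j, ?_⟩
          rw [hapc]
          rwa [(by omega : i - 1 - 1 = i - 2)] at hj
    -- conclude
    have hiff : MemR n y i k l₁ ↔ MemR n y i k l₂ := by
      constructor
      · rintro ⟨j, hj⟩
        exact ⟨j, CEy_trans _ _ _ _ hj hE⟩
      · rintro ⟨j, hj⟩
        exact ⟨j, CEy_trans _ _ _ _ hj (CEy_symm _ _ _ hE)⟩
    by_cases hm : MemR n y i k l₁
    · have hm2 := hiff.1 hm
      simp [xF, hm, hm2, show ¬ i = 0 by omega]
    · have hm2 : ¬ MemR n y i k l₂ := fun h => hm (hiff.2 h)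
      simp [xF, hm, hm2, show ¬ i = 0 by omega]

lemma extFin_lt {n : ℕ} (x : Fin n → ℕ → ℕ → Bool) {i : ℕ} (h : i < n) :
    extFin x i = x ⟨i, h⟩ := dif_pos h

lemma CEx_xF (n : ℕ) (hn : 1 ≤ n) (y y' : fsSpace n) :
    ∀ m, m ≤ n - 1 → ∀ k k',
      CEx (extFin (xF n y)) (extFin (xF n y')) m k k' ↔ CEy n y y' m k k' := by
  intro m
  induction m with
  | zero =>
    intro _ k k'
    show extFin (xF n y) 0 k = extFin (xF n y') 0 k' ↔ _
    rw [extFin_lt _ (by omega : (0:ℕ) < n), extFin_lt _ (by omega : (0:ℕ) < n)]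
    rw [xF_zero y (by omega) k, xF_zero y' (by omega) k']
    exact Iff.rfl
  | succ m ih =>
    intro hmn k k'
    have hm : m ≤ n - 1 := by omega
    have h1m : 1 ≤ m + 1 := by omega
    have hm1n : m + 1 < n := by omega
    have hrow : ∀ (z : fsSpace n) a b, extFin (xF n z) (m + 1) a b = true ↔ MemR n z (m+1) a b := by
      intro z a b
      rw [extFin_lt _ hm1n]
      exact xF_pos z h1m hm1n a b
    have hlev : (m + 1) - 1 = m := by omega
    have hmemR : ∀ (z : fsSpace n) a b, MemR n z (m+1) a b ↔
        ∃ j, CEy n z z m (apc (n - (m+1)) a j) b := by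
      intro z a b
      unfold MemR
      rw [hlev]
    have hmn' : m ≤ n := by omega
    constructor
    · rintro ⟨h1, h2⟩
      constructor
      · intro j
        obtain ⟨l', hl', hce⟩ := h1 (apc (n - (m+1)) k j)
          ((hrow y _ _).2 ((hmemR y _ _).2 ⟨j, CEy_refl m hmn' _⟩))
        obtain ⟨j', hj'⟩ := (hmemR y' _ _).1 ((hrow y' _ _).1 hl')
        exact ⟨j', CEy_trans m _ _ _ ((ih hm _ _).1 hce) (CEy_symm m _ _ hj')⟩
      · intro j'
        obtain ⟨l, hl, hce⟩ := h2 (apc (n - (m+1)) k' j')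
          ((hrow y' _ _).2 ((hmemR y' _ _).2 ⟨j', CEy_refl m hmn' _⟩))
        obtain ⟨j, hj⟩ := (hmemR y _ _).1 ((hrow y _ _).1 hl)
        exact ⟨j, CEy_trans m _ _ _ hj ((ih hm _ _).1 hce)⟩
    · rintro ⟨g1, g2⟩
      constructor
      · intro l hl
        obtain ⟨j, hj⟩ := (hmemR y _ _).1 ((hrow y _ _).1 hl)
        obtain ⟨j', hce⟩ := g1 j
        refine ⟨apc (n - (m+1)) k' j', (hrow y' _ _).2 ((hmemR y' _ _).2 ⟨j', CEy_refl m hmn' _⟩), ?_⟩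
        exact (ih hm _ _).2 (CEy_trans m _ _ _ (CEy_symm m _ _ hj) hce)
      · intro l' hl'
        obtain ⟨j', hj'⟩ := (hmemR y' _ _).1 ((hrow y' _ _).1 hl')
        obtain ⟨j, hce⟩ := g2 j'
        refine ⟨apc (n - (m+1)) k j, (hrow y _ _).2 ((hmemR y _ _).2 ⟨j, CEy_refl m hmn' _⟩), ?_⟩
        exact (ih hm _ _).2 (CEy_trans m _ _ _ hce hj')

lemma dir2_correct (M : ℕ) (y y' : fsSpace (M + 1)) :
    Ffin (M + 1) (xF (M + 1) y) (xF (M + 1) y') ↔ fsIter (M + 1) y y' := by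
  unfold Ffin
  rw [Nat.add_sub_cancel, AS_as, AS_as]
  refine Iff.trans (ASS_eq_iff _ _ M) ?_
  have hb : ∀ k k', CEx (extFin (xF (M+1) y)) (extFin (xF (M+1) y')) M k k' ↔
      fsIter M (y (Nat.unpair k).1) (y' (Nat.unpair k').1) := by
    intro k k'
    rw [CEx_xF (M+1) (by omega) y y' M (by omega)]
    exact CEy_top M y y' k k'
  constructor
  · rintro ⟨h1, h2⟩
    constructor
    · intro a
      obtain ⟨k', hk'⟩ := h1 (Nat.pair a 0)
      have := (hb _ _).1 hk'
      rw [Nat.unpair_pair] at this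
      exact ⟨(Nat.unpair k').1, this⟩
    · intro a
      obtain ⟨k, hk⟩ := h2 (Nat.pair a 0)
      have := (hb _ _).1 hk
      rw [Nat.unpair_pair] at this
      exact ⟨(Nat.unpair k).1, fsIter_symm M _ _ this⟩
  · rintro ⟨h1, h2⟩
    constructor
    · intro k
      obtain ⟨b, hb'⟩ := h1 (Nat.unpair k).1
      refine ⟨Nat.pair b 0, (hb _ _).2 ?_⟩
      rwa [Nat.unpair_pair]
    · intro k'
      obtain ⟨b, hb'⟩ := h2 (Nat.unpair k').1
      refine ⟨Nat.pair b 0, (hb _ _).2 ?_⟩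
      rw [Nat.unpair_pair]
      exact fsIter_symm M _ _ hb'


/-! ### Measurability -/

section Meas

variable {α : Type*} [MeasurableSpace α]

lemma meas_app {β : Type*} [MeasurableSpace β] {F : α → ℕ → β}
    (hF : ∀ c, Measurable fun a => F a c) {idx : α → ℕ} (hidx : Measurable idx) :
    Measurable fun a => F a (idx a) := by
  intro s hs
  have : (fun a => F a (idx a)) ⁻¹' s = ⋃ c, (idx ⁻¹' {c}) ∩ ((fun a => F a c) ⁻¹' s) := by
    ext a
    simp only [Set.mem_preimage, Set.mem_iUnion, Set.mem_inter_iff, Set.mem_singleton_iff]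
    constructor
    · intro h
      exact ⟨idx a, rfl, h⟩
    · rintro ⟨c, rfl, h⟩
      exact h
  rw [this]
  exact MeasurableSet.iUnion fun c => (hidx (measurableSet_singleton c)).inter (hF c hs)

lemma meas_leastT {W : α → ℕ → ℕ → ℕ → Bool} (hW : ∀ i k l, Measurable fun a => W a i k l)
    (i : ℕ) {idx : α → ℕ} (hidx : Measurable idx) :
    Measurable fun a => leastT (W a) i (idx a) := by
  apply meas_app (F := fun a c => leastT (W a) i c) _ hidx
  intro c
  apply measurable_to_countable'
  intro v
  have : (fun a => leastT (W a) i c) ⁻¹' {v} =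
      (({a | W a i c v = true} ∩ ⋂ u, ⋂ (_ : u < v), {a | ¬ W a i c u = true}) ∪
       ({a : α | v = 0} ∩ ⋂ u, {a | ¬ W a i c u = true})) := by
    ext a
    simp only [Set.mem_preimage, Set.mem_singleton_iff, Set.mem_union, Set.mem_inter_iff,
      Set.mem_iInter, Set.mem_setOf_eq]
    unfold leastT
    constructor
    · intro h
      by_cases hS : ∃ l, W a i c l = true
      · left
        obtain ⟨l0, hl0⟩ := hS
        have hne : Set.Nonempty {l | W a i c l = true} := ⟨l0, hl0⟩
        have hv : v ∈ {l | W a i c l = true} := h ▸ Nat.sInf_mem hne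
        refine ⟨hv, fun u hu => ?_⟩
        exact Nat.notMem_of_lt_sInf (h ▸ hu)
      · right
        have he : {l | W a i c l = true} = ∅ := by
          ext l
          simp only [Set.mem_setOf_eq, Set.mem_empty_iff_false, iff_false]
          exact fun hl => hS ⟨l, hl⟩
        rw [he, Nat.sInf_empty] at h
        exact ⟨h.symm, fun u hu => hS ⟨u, hu⟩⟩
    · rintro (⟨hv, hlt⟩ | ⟨hv0, hall⟩)
      · have h1 : sInf {l | W a i c l = true} ≤ v := Nat.sInf_le hv
        rcases Nat.lt_or_ge (sInf {l | W a i c l = true}) v with hlt2 | hge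
        · exfalso
          have := Nat.sInf_mem (⟨v, hv⟩ : Set.Nonempty {l | W a i c l = true})
          exact hlt _ hlt2 this
        · omega
      · have he : {l | W a i c l = true} = ∅ := by
          ext l
          simp only [Set.mem_setOf_eq, Set.mem_empty_iff_false, iff_false]
          exact hall l
        rw [he, Nat.sInf_empty]
        omega
  rw [this]
  apply MeasurableSet.union
  · exact ((hW i c v (measurableSet_singleton true)).inter
      (MeasurableSet.iInter fun u => MeasurableSet.iInter fun _ =>
        (hW i c u (measurableSet_singleton true)).compl))
  · apply MeasurableSet.inter
    · by_cases hv : v = 0 <;> simp [hv]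
    · exact MeasurableSet.iInter fun u => (hW i c u (measurableSet_singleton true)).compl

lemma meas_selT {W : α → ℕ → ℕ → ℕ → Bool} (hW : ∀ i k l, Measurable fun a => W a i k l)
    (i j : ℕ) {idx : α → ℕ} (hidx : Measurable idx) :
    Measurable fun a => selT (W a) i (idx a) j := by
  unfold selT
  apply Measurable.ite
  · have : {a | W a i (idx a) j = true} = (fun a => W a i (idx a) j) ⁻¹' {true} := rfl
    rw [this]
    exact (meas_app (F := fun a c => W a i c j) (fun c => hW i c j) hidx)
      (measurableSet_singleton true)
  · exact measurable_const
  · exact meas_leastT hW i hidx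

lemma meas_W_eval {W : α → ℕ → ℕ → ℕ → Bool} (hW : ∀ i k l, Measurable fun a => W a i k l)
    (i l : ℕ) {idx : α → ℕ} (hidx : Measurable idx) :
    Measurable fun a => W a i (idx a) l :=
  meas_app (F := fun a c => W a i c l) (fun c => hW i c l) hidx

lemma meas_gB {W : α → ℕ → ℕ → ℕ → Bool} (hW : ∀ i k l, Measurable fun a => W a i k l) :
    ∀ (m : ℕ) (idx : α → ℕ), Measurable idx → Measurable fun a => gB (W a) m (idx a) := by
  intro m
  induction m with
  | zero =>
    intro idx hidx
    show Measurable fun a => (fun c => gB (W a) 0 (idx a) c)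
    apply measurable_pi_lambda
    intro c
    show Measurable fun a => W a 0 (idx a) c
    exact meas_W_eval hW 0 c hidx
  | succ m ih =>
    intro idx hidx
    show Measurable fun a => (fun j => gB (W a) m (selT (W a) (m + 1) (idx a) j))
    apply measurable_pi_lambda
    intro j
    exact ih _ (meas_selT hW (m + 1) j hidx)

lemma meas_Atn : ∀ (j : ℕ) (l c : ℕ), Measurable fun z : fsSpace j => Atn j z l c := by
  intro j
  induction j with
  | zero =>
    intro l c
    show Measurable fun z : ℕ → Bool => z c
    exact measurable_pi_apply c
  | succ j ih =>
    intro l c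
    show Measurable fun z : ℕ → fsSpace j => Atn j (z (Nat.unpair l).1) (Nat.unpair l).2 c
    exact (ih (Nat.unpair l).2 c).comp (measurable_pi_apply (Nat.unpair l).1)

lemma measSet_CEy (n : ℕ) :
    ∀ i a b, MeasurableSet {p : fsSpace n × fsSpace n | CEy n p.1 p.2 i a b} := by
  intro i
  induction i with
  | zero =>
    intro a b
    have : {p : fsSpace n × fsSpace n | CEy n p.1 p.2 0 a b} =
        ⋂ c, ⋃ v : Bool, ((fun p : fsSpace n × fsSpace n => Atn n p.1 a c) ⁻¹' {v}) ∩
          ((fun p : fsSpace n × fsSpace n => Atn n p.2 b c) ⁻¹' {v}) := by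
      ext p
      show (Atn n p.1 a = Atn n p.2 b) ↔ _
      rw [funext_iff]
      simp only [Set.mem_iInter, Set.mem_iUnion, Set.mem_inter_iff, Set.mem_preimage,
        Set.mem_singleton_iff]
      constructor
      · intro h c
        exact ⟨Atn n p.1 a c, rfl, (h c).symm⟩
      · intro h c
        obtain ⟨v, h1, h2⟩ := h c
        rw [h1, h2]
    rw [this]
    refine MeasurableSet.iInter fun c => MeasurableSet.iUnion fun v => MeasurableSet.inter ?_ ?_
    · exact ((meas_Atn n a c).comp measurable_fst) (measurableSet_singleton v)
    · exact ((meas_Atn n b c).comp measurable_snd) (measurableSet_singleton v)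
  | succ i ih =>
    intro a b
    have : {p : fsSpace n × fsSpace n | CEy n p.1 p.2 (i+1) a b} =
        (⋂ j, ⋃ j', {p : fsSpace n × fsSpace n |
            CEy n p.1 p.2 i (apc (n - (i+1)) a j) (apc (n - (i+1)) b j')}) ∩
        (⋂ j', ⋃ j, {p : fsSpace n × fsSpace n |
            CEy n p.1 p.2 i (apc (n - (i+1)) a j) (apc (n - (i+1)) b j')}) := by
      ext p
      simp only [Set.mem_inter_iff, Set.mem_iInter, Set.mem_iUnion, Set.mem_setOf_eq]
      exact Iff.rfl
    rw [this]
    exact (MeasurableSet.iInter fun j => MeasurableSet.iUnion fun j' => ih _ _).inter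
      (MeasurableSet.iInter fun j' => MeasurableSet.iUnion fun j => ih _ _)

lemma meas_xF (n : ℕ) : Measurable fun y : fsSpace n => xF n y := by
  apply measurable_pi_lambda
  intro i
  apply measurable_pi_lambda
  intro k
  apply measurable_pi_lambda
  intro l
  apply measurable_to_countable'
  intro v
  by_cases hi : i.val = 0
  · have : (fun y : fsSpace n => xF n y i k l) ⁻¹' {v} =
        (fun y : fsSpace n => Atn n y k l) ⁻¹' {v} := by
      ext y
      simp [xF, hi]
    rw [this]
    exact meas_Atn n k l (measurableSet_singleton v)
  · have hM : MeasurableSet {y : fsSpace n | MemR n y i.val k l} := by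
      have : {y : fsSpace n | MemR n y i.val k l} =
          ⋃ j, (fun y : fsSpace n => (y, y)) ⁻¹'
            {p : fsSpace n × fsSpace n | CEy n p.1 p.2 (i.val - 1) (apc (n - i.val) k j) l} := by
        ext y
        simp only [Set.mem_iUnion, Set.mem_preimage, Set.mem_setOf_eq]
        exact Iff.rfl
      rw [this]
      exact MeasurableSet.iUnion fun j =>
        (measurable_id.prodMk measurable_id) (measSet_CEy n (i.val - 1) _ _)
    have : (fun y : fsSpace n => xF n y i k l) ⁻¹' {v} =
        if v = true then {y : fsSpace n | MemR n y i.val k l}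
        else {y : fsSpace n | MemR n y i.val k l}ᶜ := by
      ext y
      by_cases hm : MemR n y i.val k l <;> cases v <;> simp [xF, hi, hm]
    rw [this]
    split
    · exact hM
    · exact hM.compl

end Meas

end Aux





/-- for every finite `n ≥ 1`, `F_n` (on `X_n`) and `=^{+n}` are
Borel bireducible. -/
theorem Fn_bireducible_fsIter (n : ℕ) (hn : 1 ≤ n) :
    BorelReducible (fun a b : ↥(XSet n) => Ffin n a.1 b.1) (fsIter n) ∧
    BorelReducible (fsIter n) (fun a b : ↥(XSet n) => Ffin n a.1 b.1) := by
  obtain ⟨M, rfl⟩ : ∃ M, n = M + 1 := ⟨n - 1, by omega⟩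
  have hW : ∀ i k l, Measurable fun x : ↥(XSet (M+1)) => extFin x.1 i k l := by
    intro i k l
    by_cases h : i < M + 1
    · have : (fun x : ↥(XSet (M+1)) => extFin x.1 i k l) =
          fun x : ↥(XSet (M+1)) => x.1 ⟨i, h⟩ k l := by
        funext x
        rw [extFin_lt x.1 h]
      rw [this]
      exact (measurable_pi_apply l).comp ((measurable_pi_apply k).comp
        ((measurable_pi_apply (⟨i, h⟩ : Fin (M+1))).comp measurable_subtype_coe))
    · have : (fun x : ↥(XSet (M+1)) => extFin x.1 i k l) = fun _ => true := by
        funext x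
        simp [extFin, h]
      rw [this]
      exact measurable_const
  constructor
  · -- F_n ≤_B =^{+n}
    refine ⟨fun x => (fun k => gB (extFin x.1) M k : fsSpace (M+1)), ?_, ?_⟩
    · show Measurable fun x : ↥(XSet (M+1)) => (fun k => gB (extFin x.1) M k)
      apply measurable_pi_lambda
      intro k
      exact meas_gB hW M (fun _ => k) measurable_const
    · intro a b
      have hwa : ∀ i, 1 ≤ i → i ≤ M → ∀ k, ∃ l, extFin a.1 i k l = true := by
        intro i h1 h2 k
        have h3 : i < M + 1 := by omega
        rw [extFin_lt a.1 h3]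
        exact (a.2 i h1 h3).2.1 k
      have hwb : ∀ i, 1 ≤ i → i ≤ M → ∀ k, ∃ l, extFin b.1 i k l = true := by
        intro i h1 h2 k
        have h3 : i < M + 1 := by omega
        rw [extFin_lt b.1 h3]
        exact (b.2 i h1 h3).2.1 k
      have key := gB_iff (extFin a.1) (extFin b.1) M hwa hwb
      have key' := gB_iff (extFin b.1) (extFin a.1) M hwb hwa
      show (AS (extFin a.1) (M + 1 - 1) = AS (extFin b.1) (M + 1 - 1)) ↔
        fsIter (M+1) (fun k => gB (extFin a.1) M k) (fun k => gB (extFin b.1) M k)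
      rw [Nat.add_sub_cancel, AS_as, AS_as]
      refine Iff.trans (ASS_eq_iff _ _ M) ?_
      constructor
      · rintro ⟨h1, h2⟩
        constructor
        · intro k
          obtain ⟨k', hk'⟩ := h1 k
          exact ⟨k', (key k k').2 hk'⟩
        · intro k'
          obtain ⟨k, hk⟩ := h2 k'
          exact ⟨k, (key' k' k).2 (CEx_symm _ _ M k k' hk)⟩
      · rintro ⟨h1, h2⟩
        constructor
        · intro k
          obtain ⟨k', hk'⟩ := h1 k
          exact ⟨k', (key k k').1 hk'⟩
        · intro k'
          obtain ⟨k, hk⟩ := h2 k'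
          exact ⟨k, CEx_symm _ _ M k' k ((key' k' k).1 hk)⟩
  · -- =^{+n} ≤_B F_n
    refine ⟨fun y => ⟨xF (M+1) y, xF_mem (by omega) y⟩, ?_, ?_⟩
    · exact Measurable.subtype_mk (meas_xF (M+1))
    · intro a b
      exact (dir2_correct M a b).symm
end

section
/- The equivalence relations F_ω (on X_ω) and =^{+ω} are Borel bireducible. -/
open MeasureTheory

namespace FOm

/-- Interpretation of `fsSpace m` as an element of `It m`. -/
def iota : (m : ℕ) → fsSpace m → It m
  | 0, z => z
  | m + 1, z => {t : It m | ∃ n, t = iota m (z n)}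

theorem fsIter_iff_iota : ∀ (m : ℕ) (a b : fsSpace m), fsIter m a b ↔ iota m a = iota m b := by
  intro m
  induction m with
  | zero => intro a b; rfl
  | succ m ih =>
    intro a b
    constructor
    · rintro ⟨h1, h2⟩
      apply Set.eq_of_subset_of_subset
      · rintro t ⟨n, rfl⟩
        obtain ⟨m', hm'⟩ := h1 n
        exact ⟨m', ((ih _ _).1 hm')⟩
      · rintro t ⟨n, rfl⟩
        obtain ⟨m', hm'⟩ := h2 n
        exact ⟨m', ((ih _ _).1 hm')⟩
    · intro h
      have h' : ∀ t : It m, (∃ n, t = iota m (a n)) ↔ (∃ n, t = iota m (b n)) :=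
        fun t => Set.ext_iff.mp h t
      constructor
      · intro n
        obtain ⟨m', hm'⟩ := (h' (iota m (a n))).1 ⟨n, rfl⟩
        exact ⟨m', (ih _ _).2 hm'⟩
      · intro n
        obtain ⟨m', hm'⟩ := (h' (iota m (b n))).2 ⟨n, rfl⟩
        exact ⟨m', (ih _ _).2 hm'⟩

theorem rowNonempty (x : ↥XInf) (i : ℕ) (hi : 1 ≤ i) (l : ℕ) : ∃ j, x.1 i l j = true :=
  (x.2 i hi).2.1 l

/-- The coding sequence for direction 1. -/
noncomputable def ee (x : ↥XInf) : (m : ℕ) → ℕ → fsSpace m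
  | 0, l => x.1 0 l
  | m + 1, l => fun j =>
      if x.1 (m+1) l j = true then ee x m j
      else ee x m (Nat.find (rowNonempty x (m+1) (Nat.le_add_left 1 m) l))

theorem iota_ee (x : ↥XInf) : ∀ (m : ℕ) (l : ℕ),
    iota (m+1) (ee x (m+1) l) = aF x.1 m l := by
  have key : ∀ (m : ℕ), (∀ l, iota (m+1) (ee x (m+1) l) = aF x.1 m l) := by
    intro m
    induction m with
    | zero =>
      intro l
      apply Set.eq_of_subset_of_subset
      · rintro t ⟨n, rfl⟩
        show ∃ k, x.1 1 l k = true ∧ _ = x.1 0 k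
        by_cases h : x.1 1 l n = true
        · exact ⟨n, h, by simp [ee, h, iota]⟩
        · refine ⟨Nat.find (rowNonempty x 1 (le_refl 1) l), Nat.find_spec (rowNonempty x 1 (le_refl 1) l), ?_⟩
          simp [ee, h, iota]
      · rintro t ⟨k, hk, rfl⟩
        exact ⟨k, by simp [ee, hk, iota]; rfl⟩
    | succ m ih =>
      intro l
      apply Set.eq_of_subset_of_subset
      · rintro t ⟨n, rfl⟩
        show ∃ k, x.1 (m+2) l k = true ∧ _ = aF x.1 m k
        by_cases h : x.1 (m+2) l n = true
        · exact ⟨n, h, by simp only [ee, h, if_true]; exact ih n⟩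
        · refine ⟨Nat.find (rowNonempty x (m+2) (by omega) l), Nat.find_spec (rowNonempty x (m+2) (by omega) l), ?_⟩
          simp only [ee, h, if_false]
          exact ih _
      · rintro t ⟨k, hk, rfl⟩
        refine ⟨k, ?_⟩
        simp only [ee, hk, if_true]
        exact (ih k).symm
  exact key

/-- The direction-1 reduction map. -/
noncomputable def f1 (x : ↥XInf) : ∀ k, fsSpace k := fun k =>
  match k with
  | 0 => (fun _ => false : fsSpace 0)
  | k + 1 => (fun l => ee x k l : fsSpace (k+1))

theorem iota_f1 (x : ↥XInf) (k : ℕ) : iota (k+1) (f1 x (k+1)) = AS x.1 k := by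
  cases k with
  | zero =>
    apply Set.eq_of_subset_of_subset
    · rintro t ⟨n, rfl⟩; exact ⟨n, rfl⟩
    · rintro t ⟨n, rfl⟩; exact ⟨n, rfl⟩
  | succ k =>
    apply Set.eq_of_subset_of_subset
    · rintro t ⟨n, rfl⟩; exact ⟨n, iota_ee x k n⟩
    · rintro t ⟨n, rfl⟩; exact ⟨n, (iota_ee x k n).symm⟩

theorem f1_iff (a b : ↥XInf) : Fomega a.1 b.1 ↔ fsOmega (f1 a) (f1 b) := by
  constructor
  · intro h k
    cases k with
    | zero => rfl
    | succ k =>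
      rw [fsIter_iff_iota, iota_f1, iota_f1]
      exact h k
  · intro h m
    have := h (m+1)
    rw [fsIter_iff_iota, iota_f1, iota_f1] at this
    exact this

theorem meas_coord (i l j : ℕ) : Measurable (fun x : ↥XInf => x.1 i l j) :=
  (measurable_pi_apply j).comp ((measurable_pi_apply l).comp
    ((measurable_pi_apply i).comp measurable_subtype_coe))

theorem measSet_coord (i l j : ℕ) : MeasurableSet {x : ↥XInf | x.1 i l j = true} :=
  meas_coord i l j (measurableSet_singleton true)

theorem meas_nat_cases {α β : Type*} [MeasurableSpace α] [MeasurableSpace β] {N : α → ℕ}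
    (hN : Measurable N) {g : α → ℕ → β} (hg : ∀ n, Measurable fun a => g a n) :
    Measurable fun a => g a (N a) := by
  intro S hS
  have heq : (fun a => g a (N a)) ⁻¹' S = ⋃ n, (N ⁻¹' {n}) ∩ ((fun a => g a n) ⁻¹' S) := by
    ext a
    simp only [Set.mem_preimage, Set.mem_iUnion, Set.mem_inter_iff, Set.mem_singleton_iff]
    constructor
    · intro h; exact ⟨N a, rfl, h⟩
    · rintro ⟨n, hn, h⟩; rw [hn]; exact h
  rw [heq]
  exact MeasurableSet.iUnion fun n =>
    (hN (measurableSet_singleton n)).inter (hg n hS)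

theorem meas_find (i l : ℕ) (hi : 1 ≤ i) :
    Measurable (fun x : ↥XInf => Nat.find (rowNonempty x i hi l)) := by
  apply measurable_to_nat
  intro y
  have heq : (fun x : ↥XInf => Nat.find (rowNonempty x i hi l)) ⁻¹'
      {Nat.find (rowNonempty y i hi l)} =
      {x : ↥XInf | x.1 i l (Nat.find (rowNonempty y i hi l)) = true} ∩
        ⋂ (m : ℕ) (_ : m < Nat.find (rowNonempty y i hi l)),
          {x : ↥XInf | x.1 i l m = true}ᶜ := by
    ext x
    simp only [Set.mem_preimage, Set.mem_singleton_iff, Set.mem_inter_iff, Set.mem_iInter,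
      Set.mem_compl_iff, Set.mem_setOf_eq, Nat.find_eq_iff]
  rw [heq]
  exact (measSet_coord _ _ _).inter (MeasurableSet.iInter fun m =>
    MeasurableSet.iInter fun _ => (measSet_coord _ _ _).compl)

theorem meas_ee : ∀ (m l : ℕ), Measurable (fun x : ↥XInf => ee x m l) := by
  intro m
  induction m with
  | zero =>
    intro l
    exact measurable_pi_lambda _ fun j => meas_coord 0 l j
  | succ m ih =>
    intro l
    apply measurable_pi_lambda
    intro j
    have : (fun x : ↥XInf => ee x (m+1) l j) = fun x : ↥XInf =>
        if x.1 (m+1) l j = true then ee x m j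
        else ee x m (Nat.find (rowNonempty x (m+1) (Nat.le_add_left 1 m) l)) := rfl
    rw [this]
    exact Measurable.ite (measSet_coord (m+1) l j) (ih j)
      (meas_nat_cases (meas_find (m+1) l (Nat.le_add_left 1 m)) fun n => ih n)

theorem meas_f1 : Measurable f1 := by
  apply measurable_pi_lambda
  intro k
  cases k with
  | zero => exact measurable_const
  | succ k => exact measurable_pi_lambda _ fun l => meas_ee k l

theorem direction1 : BorelReducible (fun a b : ↥XInf => Fomega a.1 b.1) fsOmega :=
  ⟨f1, meas_f1, fun a b => f1_iff a b⟩

end FOm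

namespace FOm2

instance instMemIt (j : ℕ) : Membership (It j) (It (j+1)) :=
  inferInstanceAs (Membership (It j) (Set (It j)))

/-- Tagged pairing on Cantor space. -/
def T (t : ℕ) (r : ℕ → Bool) : ℕ → Bool := fun n =>
  if n % 2 = 0 then decide (n / 2 = t) else r (n / 2)

theorem T_even (t : ℕ) (r : ℕ → Bool) (n : ℕ) : T t r (2 * n) = decide (n = t) := by
  simp [T, Nat.mul_div_cancel_left]

theorem T_odd (t : ℕ) (r : ℕ → Bool) (n : ℕ) : T t r (2 * n + 1) = r n := by
  have h1 : (2 * n + 1) % 2 = 1 := by omega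
  have h2 : (2 * n + 1) / 2 = n := by omega
  simp [T, h1, h2]

theorem T_inj_tag {t t' : ℕ} {r r' : ℕ → Bool} (h : T t r = T t' r') : t = t' := by
  have := congrFun h (2 * t)
  rw [T_even, T_even] at this
  simp at this
  exact this

theorem T_inj_r {t t' : ℕ} {r r' : ℕ → Bool} (h : T t r = T t' r') : r = r' := by
  funext n
  have := congrFun h (2 * n + 1)
  rwa [T_odd, T_odd] at this

/-- Full application of an `fsSpace m` element along a list of naturals (padded by 0). -/
def ap : (m : ℕ) → fsSpace m → List ℕ → fsSpace 0
  | 0, z, _ => z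
  | m + 1, z, [] => ap m (z 0) []
  | m + 1, z, n :: c => ap m (z n) c

theorem ap_eq (m : ℕ) (z : fsSpace (m+1)) (c : List ℕ) :
    ap (m+1) z c = ap m (z c.headI) c.tail := by
  cases c <;> rfl

/-- First `d` entries of a list, padded with `0`s. -/
def padTake (d : ℕ) (c : List ℕ) : List ℕ := List.ofFn fun i : Fin d => c.getD i 0

theorem getD_zero (c : List ℕ) : c.getD 0 0 = c.headI := by cases c <;> rfl

theorem getD_succ (c : List ℕ) (i : ℕ) : c.getD (i+1) 0 = c.tail.getD i 0 := by
  cases c <;> simp [List.getD]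

theorem padTake_cons (d : ℕ) (c : List ℕ) :
    padTake (d+1) c = c.headI :: padTake d c.tail := by
  rw [padTake, List.ofFn_succ]
  congr 1
  · exact getD_zero c
  · rw [padTake]
    congr 1
    funext i
    exact getD_succ c i

theorem padTake_snoc (d : ℕ) (c : List ℕ) :
    padTake (d+1) c = padTake d c ++ [c.getD d 0] := by
  rw [padTake, List.ofFn_succ']
  simp [List.concat_eq_append, padTake]

theorem padTake_padTake (d : ℕ) (c : List ℕ) :
    padTake d (padTake d c) = padTake d c := by
  induction d generalizing c with
  | zero => rfl
  | succ d ih =>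
    rw [padTake_cons d c, padTake_cons]
    simp only [List.headI, List.tail]
    rw [ih]

theorem ap_padTake (m : ℕ) (z : fsSpace m) (c : List ℕ) :
    ap m z (padTake m c) = ap m z c := by
  induction m generalizing c with
  | zero => rfl
  | succ m ih =>
    rw [ap_eq, ap_eq, padTake_cons]
    simp only [List.headI, List.tail]
    exact ih (z c.headI) c.tail

/-- Decoding of a natural as a (tag, path) pair. -/
def dec (e : ℕ) : ℕ × List ℕ := Denumerable.ofNat (ℕ × List ℕ) e

def enc (p : ℕ × List ℕ) : ℕ := Encodable.encode p

theorem dec_enc (p : ℕ × List ℕ) : dec (enc p) = p := Denumerable.ofNat_encode p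

/-- Syntactic child relation on codes: `p` a code at level `j+1`, `q` at level `j`. -/
def childOK (j : ℕ) (p q : ℕ × List ℕ) : Prop :=
  q.1 = p.1 ∧ (if p.1 ≤ j then q.2 = p.2
    else ∃ n, q.2 = padTake (p.1 - (j+1)) p.2 ++ [n])

noncomputable def cdec (p : Prop) : Bool := @decide p (Classical.propDecidable p)

theorem cdec_iff (p : Prop) : cdec p = true ↔ p := by
  simp [cdec]

/-- The direction-2 reduction: the constructed element of `X_ω`. -/
noncomputable def gy (y : ∀ k, fsSpace k) : ℕ → ℕ → ℕ → Bool
  | 0 => fun e => T (dec e).1 (ap (dec e).1 (y (dec e).1) (dec e).2)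
  | j + 1 => fun l e =>
      cdec (∃ e', childOK j (dec l) (dec e') ∧ gy y j e' = gy y j e)

/-- The semantic object coded by `e` at level `j`. -/
noncomputable def obj (y : ∀ k, fsSpace k) : (j : ℕ) → ℕ → It j
  | 0, e => gy y 0 e
  | j + 1, l => {t : It j | ∃ e', childOK j (dec l) (dec e') ∧ t = obj y j e'}

/-- Iterated singletons. -/
def sing (r : It 0) : (j : ℕ) → It j
  | 0 => r
  | j + 1 => {u : It j | u = sing r j}

/-- `sem t k z j c` : the level-`j` object of the tag-`t` tree with root `z : fsSpace k`,
at the position determined by the path `c` (for `j < k`), or the iterated singleton of the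
full tree (for `j ≥ k`). -/
noncomputable def sem (t : ℕ) : (k : ℕ) → fsSpace k → (j : ℕ) → List ℕ → It j
  | 0, z, j, _ => sing (T t z) j
  | k + 1, z, 0, c => sem t k (z c.headI) 0 c.tail
  | k + 1, z, j + 1, c =>
      if j + 1 ≤ k then sem t k (z c.headI) (j+1) c.tail
      else if j = k then {u : It j | ∃ n, u = sem t k (z n) j []}
      else {u : It j | u = sem t (k+1) z j c}
  termination_by k _ j => (k, j)

theorem sem_base (t : ℕ) (z : fsSpace 0) (j : ℕ) (c : List ℕ) :
    sem t 0 z j c = sing (T t z) j := by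
  simp [sem]

theorem sem_nav (t : ℕ) (k : ℕ) (z : fsSpace (k+1)) (j : ℕ) (hj : j ≤ k) (c : List ℕ) :
    sem t (k+1) z j c = sem t k (z c.headI) j c.tail := by
  cases j with
  | zero => simp [sem]
  | succ j => rw [sem]; rw [if_pos (by omega)]

theorem sem_theta (t : ℕ) (k : ℕ) (z : fsSpace (k+1)) (c : List ℕ) :
    sem t (k+1) z (k+1) c = {u : It k | ∃ n, u = sem t k (z n) k []} := by
  rw [sem]
  rw [if_neg (by omega)]; exact if_pos rfl

theorem sem_sing (t : ℕ) (k : ℕ) (z : fsSpace k) (j : ℕ) (hj : k ≤ j) (c : List ℕ) :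
    sem t k z (j+1) c = {u : It j | u = sem t k z j c} := by
  cases k with
  | zero => rw [sem_base, sem_base]; rfl
  | succ k =>
    rw [sem]
    rw [if_neg (by omega)]; exact if_neg (by omega)

theorem sem_step (t : ℕ) (j : ℕ) :
    ∀ (k : ℕ) (z : fsSpace k) (c : List ℕ), j < k →
    sem t k z (j+1) c = {u : It j | ∃ n, u = sem t k z j (padTake (k - (j+1)) c ++ [n])} := by
  intro k
  induction k with
  | zero => intro z c h; omega
  | succ k ih =>
    intro z c h
    by_cases hj : j = k
    · subst hj
      rw [sem_theta]
      refine Set.ext fun u => ?_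
      constructor
      · rintro ⟨n, rfl⟩
        refine ⟨n, ?_⟩
        rw [show j + 1 - (j+1) = 0 from by omega]
        rw [show padTake 0 c ++ [n] = [n] from rfl]
        rw [sem_nav t j z j (le_refl j) [n]]
        rfl
      · rintro ⟨n, rfl⟩
        refine ⟨n, ?_⟩
        rw [show j + 1 - (j+1) = 0 from by omega]
        rw [show padTake 0 c ++ [n] = [n] from rfl]
        rw [sem_nav t j z j (le_refl j) [n]]
        rfl
    · have hjk : j < k := by omega
      rw [sem_nav t k z (j+1) (by omega) c]
      rw [ih (z c.headI) c.tail hjk]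
      refine Set.ext fun u => ?_
      have harith : k + 1 - (j+1) = (k - (j+1)) + 1 := by omega
      constructor
      · rintro ⟨n, rfl⟩
        refine ⟨n, ?_⟩
        rw [harith, padTake_cons]
        rw [show (c.headI :: padTake (k - (j + 1)) c.tail) ++ [n]
            = c.headI :: (padTake (k - (j + 1)) c.tail ++ [n]) from rfl]
        rw [sem_nav t k z j (by omega)]
        rfl
      · rintro ⟨n, hu⟩
        refine ⟨n, ?_⟩
        rw [harith, padTake_cons] at hu
        rw [show (c.headI :: padTake (k - (j + 1)) c.tail) ++ [n]
            = c.headI :: (padTake (k - (j + 1)) c.tail ++ [n]) from rfl] at hu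
        rw [sem_nav t k z j (by omega)] at hu
        exact hu

theorem obj_sem (y : ∀ k, fsSpace k) :
    ∀ (j : ℕ) (e : ℕ),
      obj y j e = sem (dec e).1 (dec e).1 (y (dec e).1) j (dec e).2 := by
  intro j
  induction j with
  | zero =>
    intro e
    show gy y 0 e = _
    rw [gy]
    -- sem _ k _ 0 c = T k (ap k (y k) c)
    suffices h : ∀ (t m : ℕ) (z : fsSpace m) (c : List ℕ), sem t m z 0 c = T t (ap m z c) by
      rw [h]
    intro t m
    induction m with
    | zero => intro z c; rw [sem_base]; rfl
    | succ m ihm => intro z c; rw [sem_nav t m z 0 (Nat.zero_le m) c, ihm, ap_eq]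
  | succ j ih =>
    intro e
    by_cases hk : (dec e).1 ≤ j
    · rw [sem_sing _ _ _ j hk]
      refine Set.ext fun u => ?_
      constructor
      · rintro ⟨e', ⟨h1, h2⟩, rfl⟩
        rw [if_pos (h1 ▸ hk)] at h2
        show obj y j e' = _
        rw [ih e', h1, h2]
      · intro hu
        refine ⟨enc ((dec e).1, (dec e).2), ?_, ?_⟩
        · constructor
          · rw [dec_enc]
          · rw [dec_enc]
            simp only [if_pos hk]
        · show u = obj y j _
          rw [ih, dec_enc]
          exact hu
    · push_neg at hk
      rw [sem_step _ j _ _ _ hk]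
      refine Set.ext fun u => ?_
      constructor
      · rintro ⟨e', ⟨h1, h2⟩, rfl⟩
        rw [if_neg (by omega : ¬ (dec e).1 ≤ j)] at h2
        obtain ⟨n, hn⟩ := h2
        refine ⟨n, ?_⟩
        show obj y j e' = _
        rw [ih e', h1, hn]
      · rintro ⟨n, hu⟩
        refine ⟨enc ((dec e).1, padTake ((dec e).1 - (j+1)) (dec e).2 ++ [n]), ?_, ?_⟩
        · constructor
          · rw [dec_enc]
          · rw [dec_enc]
            rw [if_neg (by omega : ¬ (dec e).1 ≤ j)]
            exact ⟨n, rfl⟩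
        · show u = obj y j _
          rw [ih, dec_enc]
          exact hu

theorem gy_zero (y : ∀ k, fsSpace k) (e : ℕ) :
    gy y 0 e = T (dec e).1 (ap (dec e).1 (y (dec e).1) (dec e).2) := rfl

theorem gy_succ (y : ∀ k, fsSpace k) (j l e : ℕ) :
    gy y (j+1) l e =
      cdec (∃ e', childOK j (dec l) (dec e') ∧ gy y j e' = gy y j e) := rfl

theorem col_eq (y : ∀ k, fsSpace k) :
    ∀ (j : ℕ) (e e' : ℕ), (dec e').1 = (dec e).1 →
      padTake ((dec e).1 - j) (dec e').2 = padTake ((dec e).1 - j) (dec e).2 →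
      gy y j e' = gy y j e := by
  intro j
  induction j with
  | zero =>
    intro e e' h1 h2
    rw [gy_zero, gy_zero, h1]
    rw [Nat.sub_zero] at h2
    rw [← ap_padTake _ _ (dec e').2, h2, ap_padTake]
  | succ j ih =>
    intro e e' h1 h2
    funext s
    rw [gy_succ, gy_succ]
    congr 1
    apply propext
    by_cases hk : (dec e).1 ≤ j
    · have hpad0 : (dec e).1 - j = 0 := by omega
      constructor
      · rintro ⟨e'', ⟨g1, g2⟩, g3⟩
        rw [if_pos (h1 ▸ hk)] at g2
        refine ⟨enc ((dec e).1, (dec e).2), ⟨?_, ?_⟩, ?_⟩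
        · rw [dec_enc]
        · rw [dec_enc]; simp only [if_pos hk]
        · have := ih e'' (enc ((dec e).1, (dec e).2)) (by rw [dec_enc]; exact (g1.trans h1).symm ▸ rfl) ?_
          · rw [this]; exact g3
          · rw [dec_enc]
            rw [show (dec e'').1 - j = 0 from by omega]
            rfl
      · rintro ⟨e'', ⟨g1, g2⟩, g3⟩
        rw [if_pos hk] at g2
        refine ⟨enc ((dec e').1, (dec e').2), ⟨?_, ?_⟩, ?_⟩
        · rw [dec_enc]
        · rw [dec_enc]; simp only [if_pos (h1 ▸ hk)]
        · have := ih e'' (enc ((dec e').1, (dec e').2)) ?_ ?_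
          · rw [this]; exact g3
          · rw [dec_enc]; exact h1.trans (g1.symm ▸ rfl)
          · rw [dec_enc]
            rw [show (dec e'').1 - j = 0 from by omega]
            rfl
    · have hiff : ∀ e'', childOK j (dec e') (dec e'') ↔ childOK j (dec e) (dec e'') := by
        intro e''
        unfold childOK
        rw [h1, if_neg hk, if_neg hk, h2]
      constructor
      · rintro ⟨e'', g, g3⟩; exact ⟨e'', (hiff e'').1 g, g3⟩
      · rintro ⟨e'', g, g3⟩; exact ⟨e'', (hiff e'').2 g, g3⟩

theorem aF_row (x : ℕ → ℕ → ℕ → Bool) (m : ℕ) (l l' : ℕ)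
    (h : x (m+1) l' = x (m+1) l) : aF x m l' = aF x m l := by
  cases m with
  | zero => show {z : It 0 | ∃ k, x 1 l' k = true ∧ z = x 0 k} = _; rw [h]; rfl
  | succ m =>
    show {z : It (m+1) | ∃ k, x (m+2) l' k = true ∧ z = aF x m k} = _
    rw [h]; rfl

theorem aF_obj (y : ∀ k, fsSpace k) :
    ∀ (m l : ℕ), aF (gy y) m l = obj y (m+1) l := by
  intro m
  induction m with
  | zero =>
    intro l
    refine Set.ext fun u => ?_
    constructor
    · rintro ⟨e, he, rfl⟩
      rw [gy_succ] at he
      obtain ⟨e', hc, hcol⟩ := (cdec_iff _).1 he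
      exact ⟨e', hc, hcol.symm⟩
    · rintro ⟨e', hc, rfl⟩
      refine ⟨e', ?_, rfl⟩
      rw [gy_succ, cdec_iff]
      exact ⟨e', hc, rfl⟩
  | succ m ih =>
    intro l
    refine Set.ext fun u => ?_
    constructor
    · rintro ⟨e, he, rfl⟩
      rw [gy_succ] at he
      obtain ⟨e', hc, hcol⟩ := (cdec_iff _).1 he
      refine ⟨e', hc, ?_⟩
      rw [← ih e']
      exact aF_row (gy y) m e' e hcol.symm
    · rintro ⟨e', hc, rfl⟩
      refine ⟨e', ?_, ?_⟩
      · rw [gy_succ, cdec_iff]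
        exact ⟨e', hc, rfl⟩
      · exact (ih e').symm

theorem AS_obj (y : ∀ k, fsSpace k) (m : ℕ) :
    AS (gy y) m = {t : It m | ∃ e, t = obj y m e} := by
  cases m with
  | zero => rfl
  | succ m =>
    show {z : It (m+1) | ∃ k, z = aF (gy y) m k} = _
    refine Set.ext fun u => ?_
    constructor
    · rintro ⟨e, rfl⟩; exact ⟨e, (aF_obj y m e).symm ▸ (aF_obj y m e)⟩
    · rintro ⟨e, rfl⟩; exact ⟨e, (aF_obj y m e).symm⟩

theorem mem_gy (y : ∀ k, fsSpace k) : gy y ∈ XInf := by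
  intro i hi
  obtain ⟨j, rfl⟩ : ∃ j, i = j + 1 := ⟨i - 1, by omega⟩
  refine ⟨?_, ?_, ?_⟩
  · -- (1) every column appears in some row
    intro e
    by_cases hk : (dec e).1 ≤ j
    · refine ⟨e, ?_⟩
      rw [gy_succ, cdec_iff]
      exact ⟨e, ⟨rfl, by rw [if_pos hk]⟩, rfl⟩
    · refine ⟨enc ((dec e).1, padTake ((dec e).1 - (j+1)) (dec e).2), ?_⟩
      rw [gy_succ, cdec_iff]
      refine ⟨enc ((dec e).1, padTake ((dec e).1 - j) (dec e).2), ⟨?_, ?_⟩, ?_⟩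
      · rw [dec_enc, dec_enc]
      · rw [dec_enc, dec_enc]
        rw [if_neg (by simpa using hk)]
        refine ⟨(dec e).2.getD ((dec e).1 - (j+1)) 0, ?_⟩
        simp only
        rw [padTake_padTake, ← padTake_snoc]
        congr 1
        omega
      · apply col_eq
        · rw [dec_enc]
        · rw [dec_enc]
          show padTake ((dec e).1 - j) (padTake ((dec e).1 - j) (dec e).2) = _
          exact padTake_padTake _ _
  · -- (2) every row is nonempty
    intro l
    by_cases hk : (dec l).1 ≤ j
    · refine ⟨l, ?_⟩
      rw [gy_succ, cdec_iff]
      exact ⟨l, ⟨rfl, by rw [if_pos hk]⟩, rfl⟩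
    · refine ⟨enc ((dec l).1, padTake ((dec l).1 - (j+1)) (dec l).2 ++ [0]), ?_⟩
      rw [gy_succ, cdec_iff]
      refine ⟨enc ((dec l).1, padTake ((dec l).1 - (j+1)) (dec l).2 ++ [0]), ⟨?_, ?_⟩, rfl⟩
      · rw [dec_enc]
      · rw [dec_enc]
        rw [if_neg hk]
        exact ⟨0, rfl⟩
  · -- (3) duplicates respected
    intro k l₁ l₂ hll
    have hll' : gy y j l₁ = gy y j l₂ := by
      simpa using hll
    rw [gy_succ, gy_succ, hll']

/-- All reals hereditarily below carry the tag `k`. -/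
def AllTag : (j : ℕ) → It j → ℕ → Prop
  | 0, r, k => ∀ n, r (2 * n) = decide (n = k)
  | j + 1, S, k => ∀ t : It j, t ∈ S → AllTag j t k

/-- Hereditarily nonempty. -/
def HNE : (j : ℕ) → It j → Prop
  | 0, _ => True
  | j + 1, S => (∃ t : It j, t ∈ S) ∧ ∀ t : It j, t ∈ S → HNE j t

theorem tag_unique : ∀ (j : ℕ) (u : It j) (k k' : ℕ),
    AllTag j u k → AllTag j u k' → HNE j u → k = k' := by
  intro j
  induction j with
  | zero =>
    intro u k k' h1 h2 _
    have e1 := h1 k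
    have e2 := h2 k
    rw [e2] at e1
    simp at e1
    exact e1
  | succ j ih =>
    intro u k k' h1 h2 hne
    have h1' : ∀ t : It j, t ∈ u → AllTag j t k := h1
    have h2' : ∀ t : It j, t ∈ u → AllTag j t k' := h2
    have hne' : (∃ t : It j, t ∈ u) ∧ ∀ t : It j, t ∈ u → HNE j t := hne
    obtain ⟨t, ht⟩ := hne'.1
    exact ih t k k' (h1' t ht) (h2' t ht) (hne'.2 t ht)

theorem T_tag (t : ℕ) (r : ℕ → Bool) : ∀ n, T t r (2 * n) = decide (n = t) := T_even t r

theorem sing_tag (r : It 0) (k : ℕ) (h : AllTag 0 r k) :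
    ∀ j, AllTag j (sing r j) k := by
  intro j
  induction j with
  | zero => exact h
  | succ j ih => rintro u hu; rw [show u = sing r j from hu]; exact ih

theorem sing_hne (r : It 0) : ∀ j, HNE j (sing r j) := by
  intro j
  induction j with
  | zero => exact trivial
  | succ j ih => exact ⟨⟨sing r j, rfl⟩, fun u hu => by rw [show u = sing r j from hu]; exact ih⟩

theorem sem_tag (t : ℕ) : ∀ (k : ℕ) (z : fsSpace k) (j : ℕ) (c : List ℕ),
    AllTag j (sem t k z j c) t := by
  intro k
  induction k with
  | zero =>
    intro z j c
    rw [sem_base]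
    exact sing_tag (T t z) t (T_tag t z) j
  | succ k ihk =>
    intro z j
    induction j with
    | zero => intro c; rw [sem_nav t k z 0 (Nat.zero_le k) c]; exact ihk _ 0 _
    | succ j ihj =>
      intro c
      by_cases h1 : j + 1 ≤ k
      · rw [sem_nav t k z (j+1) h1 c]; exact ihk _ (j+1) _
      · by_cases h2 : j = k
        · subst h2
          rw [sem_theta]
          rintro u ⟨n, rfl⟩
          exact ihk (z n) j []
        · rw [sem_sing t (k+1) z j (by omega) c]
          rintro u hu
          rw [show u = sem t (k+1) z j c from hu]
          exact ihj c

theorem sem_hne (t : ℕ) : ∀ (k : ℕ) (z : fsSpace k) (j : ℕ) (c : List ℕ),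
    HNE j (sem t k z j c) := by
  intro k
  induction k with
  | zero => intro z j c; rw [sem_base]; exact sing_hne (T t z) j
  | succ k ihk =>
    intro z j
    induction j with
    | zero => intro c; rw [sem_nav t k z 0 (Nat.zero_le k) c]; exact ihk _ 0 _
    | succ j ihj =>
      intro c
      by_cases h1 : j + 1 ≤ k
      · rw [sem_nav t k z (j+1) h1 c]; exact ihk _ (j+1) _
      · by_cases h2 : j = k
        · subst h2
          rw [sem_theta]
          refine ⟨⟨sem t j (z 0) j [], ⟨0, rfl⟩⟩, ?_⟩
          rintro u ⟨n, rfl⟩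
          exact ihk (z n) j []
        · rw [sem_sing t (k+1) z j (by omega) c]
          refine ⟨⟨sem t (k+1) z j c, rfl⟩, ?_⟩
          rintro u hu
          rw [show u = sem t (k+1) z j c from hu]
          exact ihj c

theorem obj_tag (y : ∀ k, fsSpace k) (j e : ℕ) : AllTag j (obj y j e) (dec e).1 := by
  rw [obj_sem]; exact sem_tag _ _ _ j _

theorem obj_hne (y : ∀ k, fsSpace k) (j e : ℕ) : HNE j (obj y j e) := by
  rw [obj_sem]; exact sem_hne _ _ _ j _

theorem fsIter_symm : ∀ (k : ℕ) (a b : fsSpace k), fsIter k a b → fsIter k b a := by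
  intro k
  induction k with
  | zero => intro a b h; exact h.symm
  | succ k ih =>
    rintro a b ⟨h1, h2⟩
    exact ⟨h2, h1⟩

/-- Equivalent trees give the same semantic object at root level. -/
theorem sem_congr_root (t : ℕ) : ∀ (k : ℕ) (z z' : fsSpace k), fsIter k z z' →
    ∀ (c c' : List ℕ), sem t k z k c = sem t k z' k c' := by
  intro k
  induction k with
  | zero =>
    intro z z' h c c'
    have hz : z = z' := h
    rw [sem_base, sem_base, hz]
  | succ k ih =>
    rintro z z' ⟨h1, h2⟩ c c'
    rw [sem_theta, sem_theta]
    refine Set.ext fun u => ?_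
    constructor
    · rintro ⟨n, rfl⟩
      obtain ⟨m, hm⟩ := h1 n
      exact ⟨m, ih _ _ hm [] []⟩
    · rintro ⟨n, rfl⟩
      obtain ⟨m, hm⟩ := h2 n
      exact ⟨m, ih _ _ hm [] []⟩

/-- Conversely, equal semantic objects at root level give equivalent trees. -/
theorem sem_root_iff (t : ℕ) : ∀ (k : ℕ) (z z' : fsSpace k) (c c' : List ℕ),
    sem t k z k c = sem t k z' k c' → fsIter k z z' := by
  intro k
  induction k with
  | zero =>
    intro z z' c c' h
    rw [sem_base, sem_base] at h
    have : T t z = T t z' := h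
    exact T_inj_r this
  | succ k ih =>
    intro z z' c c' h
    rw [sem_theta, sem_theta] at h
    have h' : ∀ u : It k, (∃ n, u = sem t k (z n) k []) ↔ (∃ n, u = sem t k (z' n) k []) :=
      fun u => Set.ext_iff.mp h u
    constructor
    · intro n
      obtain ⟨m, hm⟩ := (h' (sem t k (z n) k [])).1 ⟨n, rfl⟩
      exact ⟨m, ih _ _ [] [] hm⟩
    · intro n
      obtain ⟨m, hm⟩ := (h' (sem t k (z' n) k [])).2 ⟨n, rfl⟩
      exact ⟨m, ih _ _ [] [] hm⟩

/-- Above the root level the semantic object is independent of the path. -/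
theorem sem_congr_high (t : ℕ) (k : ℕ) (z z' : fsSpace k) (h : fsIter k z z') :
    ∀ (j : ℕ), k ≤ j → ∀ (c c' : List ℕ), sem t k z j c = sem t k z' j c' := by
  intro j
  induction j with
  | zero =>
    intro hj c c'
    have : k = 0 := by omega
    subst this
    exact sem_congr_root t 0 z z' h c c'
  | succ j ih =>
    intro hj c c'
    rcases Nat.lt_or_ge k (j+1) with hlt | hge
    · have hkj : k ≤ j := by omega
      rw [sem_sing t k z j hkj c, sem_sing t k z' j hkj c']
      rw [ih hkj c c']
    · have : k = j + 1 := by omega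
      subst this
      exact sem_congr_root t (j+1) z z' h c c'

/-- Below the root level, any path on the left can be matched on the right. -/
theorem sem_exists_below (t : ℕ) : ∀ (k : ℕ) (z z' : fsSpace k), fsIter k z z' →
    ∀ (j : ℕ), j ≤ k → ∀ (c : List ℕ), ∃ c', sem t k z j c = sem t k z' j c' := by
  intro k
  induction k with
  | zero =>
    intro z z' h j hj c
    interval_cases j
    exact ⟨[], sem_congr_root t 0 z z' h c []⟩
  | succ k ih =>
    intro z z' h j hj c
    rcases Nat.lt_or_ge j (k+1) with hlt | hge
    · have hjk : j ≤ k := by omega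
      rw [sem_nav t k z j hjk c]
      obtain ⟨m, hm⟩ := h.1 c.headI
      obtain ⟨c'', hc''⟩ := ih (z c.headI) (z' m) hm j hjk c.tail
      refine ⟨m :: c'', ?_⟩
      rw [sem_nav t k z' j hjk (m :: c'')]
      exact hc''
    · have : j = k + 1 := by omega
      subst this
      exact ⟨c, sem_congr_root t (k+1) z z' h c c⟩

theorem sem_exists (t : ℕ) (k : ℕ) (z z' : fsSpace k) (h : fsIter k z z')
    (j : ℕ) (c : List ℕ) : ∃ c', sem t k z j c = sem t k z' j c' := by
  rcases le_or_gt j k with hj | hj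
  · exact sem_exists_below t k z z' h j hj c
  · exact ⟨c, sem_congr_high t k z z' h j (by omega) c c⟩

/-- The main equivalence for direction 2. -/
theorem gy_iff (y y' : ∀ k, fsSpace k) : fsOmega y y' ↔ Fomega (gy y) (gy y') := by
  constructor
  · intro h m
    rw [AS_obj, AS_obj]
    refine Set.ext fun u => ?_
    constructor
    · rintro ⟨e, rfl⟩
      obtain ⟨c', hc'⟩ := sem_exists (dec e).1 (dec e).1 (y (dec e).1) (y' (dec e).1)
        (h (dec e).1) m (dec e).2
      refine ⟨enc ((dec e).1, c'), ?_⟩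
      rw [obj_sem, obj_sem, dec_enc]
      exact hc'
    · rintro ⟨e, rfl⟩
      obtain ⟨c', hc'⟩ := sem_exists (dec e).1 (dec e).1 (y' (dec e).1) (y (dec e).1)
        (fsIter_symm _ _ _ (h (dec e).1)) m (dec e).2
      refine ⟨enc ((dec e).1, c'), ?_⟩
      rw [obj_sem, obj_sem, dec_enc]
      exact hc'
  · intro h k
    have hm := h k
    rw [AS_obj, AS_obj] at hm
    have hmem : obj y k (enc (k, [])) ∈ {t : It k | ∃ e, t = obj y' k e} := by
      rw [← hm]
      exact ⟨enc (k, []), rfl⟩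
    obtain ⟨e', he'⟩ := hmem
    have htag : (dec e').1 = k := by
      have t1 : AllTag k (obj y k (enc (k, []))) k := by
        have := obj_tag y k (enc (k, []))
        rwa [dec_enc] at this
      have t2 : AllTag k (obj y k (enc (k, []))) (dec e').1 := by
        rw [he']
        exact obj_tag y' k e'
      exact (tag_unique k _ _ _ t2 t1 (obj_hne y k (enc (k, [])))).symm ▸
        (tag_unique k _ k (dec e').1 t1 t2 (obj_hne y k (enc (k, []))))
    rw [obj_sem, obj_sem, dec_enc] at he'
    rw [htag] at he'
    exact sem_root_iff k k (y k) (y' k) [] (dec e').2 he'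

theorem meas_eq_bool {α : Type*} [MeasurableSpace α] {f g : α → Bool}
    (hf : Measurable f) (hg : Measurable g) : MeasurableSet {a | f a = g a} := by
  have : {a | f a = g a} =
      (f ⁻¹' {true} ∩ g ⁻¹' {true}) ∪ (f ⁻¹' {false} ∩ g ⁻¹' {false}) := by
    ext a
    simp only [Set.mem_setOf_eq, Set.mem_union, Set.mem_inter_iff, Set.mem_preimage,
      Set.mem_singleton_iff]
    rcases Bool.dichotomy (f a) with h | h <;> rcases Bool.dichotomy (g a) with h' | h' <;>
      simp [h, h']
  rw [this]
  exact ((hf (measurableSet_singleton true)).inter (hg (measurableSet_singleton true))).union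
    ((hf (measurableSet_singleton false)).inter (hg (measurableSet_singleton false)))

theorem meas_cdec {α : Type*} [MeasurableSpace α] {P : α → Prop}
    (h : MeasurableSet {a | P a}) : Measurable fun a => cdec (P a) := by
  have htrue : (fun a => cdec (P a)) ⁻¹' {true} = {a | P a} := by
    ext a; simp [cdec_iff]
  have hfalse : (fun a => cdec (P a)) ⁻¹' {false} = {a | P a}ᶜ := by
    ext a
    simp only [Set.mem_preimage, Set.mem_singleton_iff, Set.mem_compl_iff, Set.mem_setOf_eq]
    constructor
    · intro hb hp
      have hh := (cdec_iff (P a)).2 hp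
      rw [hh] at hb
      exact Bool.noConfusion hb
    · intro hp
      rcases Bool.dichotomy (cdec (P a)) with hb | hb
      · exact hb
      · exact absurd ((cdec_iff (P a)).1 hb) hp
  apply measurable_to_countable
  intro y
  rcases Bool.dichotomy (cdec (P y)) with hb | hb <;> rw [hb]
  · rw [hfalse]; exact h.compl
  · rw [htrue]; exact h

theorem meas_ap : ∀ (m : ℕ) (c : List ℕ), Measurable (fun z : fsSpace m => ap m z c) := by
  intro m
  induction m with
  | zero => intro c; exact measurable_id
  | succ m ih =>
    intro c
    have : (fun z : fsSpace (m+1) => ap (m+1) z c)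
        = fun z : fsSpace (m+1) => ap m (z c.headI) c.tail := by
      funext z; exact ap_eq m z c
    rw [this]
    exact (ih c.tail).comp (measurable_pi_apply c.headI)

theorem meas_gy : ∀ (j l n : ℕ), Measurable (fun y : ∀ k, fsSpace k => gy y j l n) := by
  intro j
  induction j with
  | zero =>
    intro e n
    have : (fun y : ∀ k, fsSpace k => gy y 0 e n)
        = fun y : ∀ k, fsSpace k =>
            (if n % 2 = 0 then decide (n / 2 = (dec e).1)
             else ap (dec e).1 (y (dec e).1) (dec e).2 (n / 2)) := rfl
    rw [this]
    by_cases hn : n % 2 = 0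
    · simp only [if_pos hn]; exact measurable_const
    · simp only [if_neg hn]
      exact (measurable_pi_apply (n/2)).comp
        ((meas_ap (dec e).1 (dec e).2).comp (measurable_pi_apply (dec e).1))
  | succ j ih =>
    intro l e
    have heq : (fun y : ∀ k, fsSpace k => gy y (j+1) l e)
        = fun y : ∀ k, fsSpace k =>
            cdec (∃ e', childOK j (dec l) (dec e') ∧ gy y j e' = gy y j e) := rfl
    rw [heq]
    apply meas_cdec
    have hset : {y : ∀ k, fsSpace k | ∃ e', childOK j (dec l) (dec e') ∧ gy y j e' = gy y j e}
        = ⋃ e', ⋃ (_ : childOK j (dec l) (dec e')),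
            ⋂ n, {y : ∀ k, fsSpace k | gy y j e' n = gy y j e n} := by
      ext y
      simp only [Set.mem_setOf_eq, Set.mem_iUnion, Set.mem_iInter]
      constructor
      · rintro ⟨e', hc, hcol⟩
        exact ⟨e', hc, fun n => congrFun hcol n⟩
      · rintro ⟨e', hc, hcol⟩
        exact ⟨e', hc, funext hcol⟩
    rw [hset]
    exact MeasurableSet.iUnion fun e' => MeasurableSet.iUnion fun _ =>
      MeasurableSet.iInter fun n => meas_eq_bool (ih e' n) (ih e n)

theorem meas_gy_full : Measurable (fun y : ∀ k, fsSpace k => gy y) :=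
  measurable_pi_lambda _ fun i => measurable_pi_lambda _ fun l =>
    measurable_pi_lambda _ fun n => by
      cases i with
      | zero => exact meas_gy 0 l n
      | succ j => exact meas_gy (j+1) l n

theorem direction2 : BorelReducible fsOmega (fun a b : ↥XInf => Fomega a.1 b.1) :=
  ⟨fun y => ⟨gy y, mem_gy y⟩, Measurable.subtype_mk meas_gy_full,
    fun a b => gy_iff a b⟩

end FOm2


/-- `F_ω` (on `X_ω`) and `=^{+ω}` are Borel bireducible. -/
theorem Fomega_bireducible_fsOmega :
    BorelReducible (fun a b : ↥XInf => Fomega a.1 b.1) fsOmega ∧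
    BorelReducible fsOmega (fun a b : ↥XInf => Fomega a.1 b.1) :=
  ⟨FOm.direction1, FOm2.direction2⟩
end

section
/- There is a comeager set C ⊆ ((2^ℕ)^ℕ)^ℕ such that the restriction of =^{+2} to C is Borel reducible to =^{+1} (that is, =^{+2}↾C ≤_B =^+). -/
open MeasureTheory

/-- Interleaving pairing function on Cantor space. -/
def pairB (u v : ℕ → Bool) : ℕ → Bool :=
  fun k => if k % 2 = 0 then u (k / 2) else v (k / 2)

lemma pairB_even (u v : ℕ → Bool) (j : ℕ) : pairB u v (2 * j) = u j := by
  have h1 : (2 * j) % 2 = 0 := by omega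
  have h2 : (2 * j) / 2 = j := by omega
  simp [pairB, h1, h2]

lemma pairB_odd (u v : ℕ → Bool) (j : ℕ) : pairB u v (2 * j + 1) = v j := by
  have h1 : (2 * j + 1) % 2 = 1 := by omega
  have h2 : (2 * j + 1) / 2 = j := by omega
  simp [pairB, h1, h2]

lemma pairB_inj {u v u' v' : ℕ → Bool} (h : pairB u v = pairB u' v') :
    u = u' ∧ v = v' := by
  constructor
  · funext j
    have := congrFun h (2 * j)
    rwa [pairB_even, pairB_even] at this
  · funext j
    have := congrFun h (2 * j + 1)
    rwa [pairB_odd, pairB_odd] at this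

/-- An explicit bijection `ℕ ≃ ℕ × ℕ × ℕ`. -/
def trip : ℕ ≃ ℕ × ℕ × ℕ := (Denumerable.eqv (ℕ × ℕ × ℕ)).symm

/-- The reduction map. -/
def fmap (x : ℕ → ℕ → ℕ → Bool) : ℕ → ℕ → Bool :=
  fun k => pairB (x (trip k).1 (trip k).2.1) (x (trip k).1 (trip k).2.2)

lemma fmap_apply (x : ℕ → ℕ → ℕ → Bool) (a b c : ℕ) :
    fmap x (trip.symm (a, b, c)) = pairB (x a b) (x a c) := by
  simp [fmap]

/-- Coordinates at different first-level indices yield distinct reals. -/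
def CSet : Set (ℕ → ℕ → ℕ → Bool) :=
  {x | ∀ n n' m m' : ℕ, n ≠ n' → x n m ≠ x n' m'}

lemma key {x y : ℕ → ℕ → ℕ → Bool} (hx : x ∈ CSet) (hy : y ∈ CSet)
    (h1 : ∀ k, ∃ l, fmap x k = fmap y l)
    (h2 : ∀ l, ∃ k, fmap x k = fmap y l) (n : ℕ) :
    ∃ n', (∀ m, ∃ m', x n m = y n' m') ∧ (∀ m', ∃ m, y n' m' = x n m) := by
  obtain ⟨l, hl⟩ := h1 (trip.symm (n, 0, 0))
  rw [fmap_apply] at hl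
  rcases h : trip l with ⟨n', b, c⟩
  have hfl : fmap y l = pairB (y n' b) (y n' c) := by simp [fmap, h]
  rw [hfl] at hl
  obtain ⟨e1, _⟩ := pairB_inj hl
  refine ⟨n', ?_, ?_⟩
  · intro m
    obtain ⟨l', hl'⟩ := h1 (trip.symm (n, 0, m))
    rw [fmap_apply] at hl'
    rcases h' : trip l' with ⟨q, d, d'⟩
    have : fmap y l' = pairB (y q d) (y q d') := by simp [fmap, h']
    rw [this] at hl'
    obtain ⟨g1, g2⟩ := pairB_inj hl'
    have hq : q = n' := by
      by_contra hne
      exact hy q n' d b hne (g1.symm.trans e1)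
    subst hq; exact ⟨d', g2⟩
  · intro m'
    obtain ⟨k, hk⟩ := h2 (trip.symm (n', b, m'))
    rw [fmap_apply] at hk
    rcases h' : trip k with ⟨q, d, d'⟩
    have : fmap x k = pairB (x q d) (x q d') := by simp [fmap, h']
    rw [this] at hk
    obtain ⟨g1, g2⟩ := pairB_inj hk
    have hq : q = n := by
      by_contra hne
      exact hx q n d 0 hne (g1.trans e1.symm)
    subst hq; exact ⟨d', g2.symm⟩

lemma exists_ne_mem_nhds (v : ℕ → Bool) (t : Set (ℕ → Bool)) (ht : t ∈ nhds v)
    (w : ℕ → Bool) : ∃ u ∈ t, u ≠ w := by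
  by_cases hvw : v = w
  · subst hvw
    rw [nhds_pi, Filter.mem_pi] at ht
    obtain ⟨K, hK, r, hr, hsub⟩ := ht
    obtain ⟨k, hk⟩ := hK.infinite_compl.nonempty
    refine ⟨Function.update v k (!v k), hsub ?_, ?_⟩
    · intro j hj
      rw [Function.update_of_ne (by rintro rfl; exact hk hj)]
      exact mem_of_mem_nhds (hr j)
    · intro hcontra
      have := congrFun hcontra k
      rw [Function.update_self] at this
      exact Bool.not_ne_self (v k) this
  · exact ⟨v, mem_of_mem_nhds ht, hvw⟩

lemma dense_ne (n n' m m' : ℕ) (hnn : n ≠ n') :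
    Dense {x : ℕ → ℕ → ℕ → Bool | x n m ≠ x n' m'} := by
  intro z
  rw [mem_closure_iff_nhds]
  intro t ht
  rw [nhds_pi, Filter.mem_pi] at ht
  obtain ⟨I, _, s, hs, hsub⟩ := ht
  have h1 := hs n'
  rw [nhds_pi, Filter.mem_pi] at h1
  obtain ⟨J, _, s', hs', hsub'⟩ := h1
  obtain ⟨u, hu, hune⟩ := exists_ne_mem_nhds (z n' m') (s' m') (hs' m') (z n m)
  refine ⟨Function.update z n' (Function.update (z n') m' u), hsub ?_, ?_⟩
  · intro i _
    rcases eq_or_ne i n' with rfl | hi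
    · rw [Function.update_self]
      refine hsub' ?_
      intro j _
      rcases eq_or_ne j m' with rfl | hj
      · rwa [Function.update_self]
      · rw [Function.update_of_ne hj]
        exact mem_of_mem_nhds (hs' j)
    · rw [Function.update_of_ne hi]
      exact mem_of_mem_nhds (hs i)
  · show _ ≠ _
    rw [Function.update_of_ne hnn, Function.update_self, Function.update_self]
    exact fun hcontra => hune hcontra.symm

lemma isOpen_ne' (n n' m m' : ℕ) :
    IsOpen {x : ℕ → ℕ → ℕ → Bool | x n m ≠ x n' m'} := by
  have hf : Continuous fun x : ℕ → ℕ → ℕ → Bool => x n m :=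
    (continuous_apply m).comp (continuous_apply n)
  have hg : Continuous fun x : ℕ → ℕ → ℕ → Bool => x n' m' :=
    (continuous_apply m').comp (continuous_apply n')
  exact (isClosed_eq hf hg).isOpen_compl

lemma CSet_residual : CSet ∈ residual (ℕ → ℕ → ℕ → Bool) := by
  have : CSet = ⋂ p : ℕ × ℕ × ℕ × ℕ,
      {x : ℕ → ℕ → ℕ → Bool | p.1 ≠ p.2.1 → x p.1 p.2.2.1 ≠ x p.2.1 p.2.2.2} := by
    ext x
    simp only [CSet, Set.mem_setOf_eq, Set.mem_iInter]
    exact ⟨fun h p => h p.1 p.2.1 p.2.2.1 p.2.2.2, fun h n n' m m' hne => h (n, n', m, m') hne⟩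
  rw [this, countable_iInter_mem]
  rintro ⟨n, n', m, m'⟩
  rcases eq_or_ne n n' with rfl | hne
  · refine Filter.mem_of_superset Filter.univ_mem ?_
    intro x _
    exact fun hcontra => absurd rfl hcontra
  · refine Filter.mem_of_superset
      (residual_of_dense_open (isOpen_ne' n n' m m') (dense_ne n n' m m' hne)) ?_
    intro x hx _
    exact hx

lemma fmap_measurable : Measurable fmap := by
  refine measurable_pi_lambda _ fun k => ?_
  refine measurable_pi_lambda _ fun j => ?_
  by_cases hj : j % 2 = 0
  · simp only [fmap, pairB, hj, if_true]
    exact (measurable_pi_apply _).comp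
      ((measurable_pi_apply _).comp (measurable_pi_apply _))
  · simp only [fmap, pairB, hj, if_false]
    exact (measurable_pi_apply _).comp
      ((measurable_pi_apply _).comp (measurable_pi_apply _))

/-- there is a comeager set `C ⊆ ((2^ℕ)^ℕ)^ℕ` such that
`=^{+2} ↾ C` is Borel reducible to `=^{+}`. -/
theorem fsIter_two_restriction_reducible :
    ∃ C : Set (fsSpace 2), C ∈ residual (fsSpace 2) ∧
      BorelReducible (fun a b : ↥C => fsIter 2 a.1 b.1) (fsIter 1) := by
  refine ⟨CSet, CSet_residual, fun a => fmap a.1, ?_, ?_⟩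
  · exact fmap_measurable.comp measurable_subtype_coe
  · rintro ⟨x, hx⟩ ⟨y, hy⟩
    show fsJump (fsJump Eq) x y ↔ fsJump Eq (fmap x) (fmap y)
    constructor
    · rintro ⟨hA, hB⟩
      constructor
      · intro k
        rcases hq : trip k with ⟨n, b, c⟩
        obtain ⟨n', hn⟩ := hA n
        obtain ⟨b', hb'⟩ := hn.1 b
        obtain ⟨c', hc'⟩ := hn.1 c
        refine ⟨trip.symm (n', b', c'), ?_⟩
        rw [fmap_apply y n' b' c']
        have : fmap x k = pairB (x n b) (x n c) := by simp [fmap, hq]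
        rw [this, hb', hc']
      · intro k
        rcases hq : trip k with ⟨n', b, c⟩
        obtain ⟨n, hn⟩ := hB n'
        obtain ⟨b', hb'⟩ := hn.1 b
        obtain ⟨c', hc'⟩ := hn.1 c
        refine ⟨trip.symm (n, b', c'), ?_⟩
        rw [fmap_apply x n b' c']
        have : fmap y k = pairB (y n' b) (y n' c) := by simp [fmap, hq]
        rw [this, hb', hc']
    · rintro ⟨h1, h2⟩
      constructor
      · intro n
        obtain ⟨n', p1, p2⟩ := key hx hy h1 (fun l => (h2 l).imp fun k hk => hk.symm) n
        exact ⟨n', p1, p2⟩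
      · intro n'
        obtain ⟨n, p1, p2⟩ := key hy hx h2 (fun l => (h1 l).imp fun k hk => hk.symm) n'
        exact ⟨n, p1, p2⟩
end

section
/- For every n with 2 ≤ n ≤ ω, the set X_n is a dense G_δ subset of ((2^ℕ)^ℕ)^n (with the product topology). -/
open MeasureTheory

/-!
Each of the countably many conditions defining `X_n` is open: an existential over `ℕ` is a
union of clopen sets, and the implication in (3) is open because its premise, an equality in
Cantor space, is closed. Hence `X_n` is `G_δ`. For density, truncate every coordinate `x i` to
the square `[0, N)²` and complete it outside the square so that its rows are pairwise distinct
and every row and column contains a `1`: condition (3) then becomes vacuous, and these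
completions converge to `x` as `N → ∞`.
-/

open Set Filter Topology Function

def Linked (y z : ℕ → ℕ → Bool) : Prop :=
  (∀ m, ∃ k, z k m = true) ∧ (∀ k, ∃ m, z k m = true) ∧
    ∀ k l₁ l₂, y l₁ = y l₂ → z k l₁ = z k l₂

theorem XInf_eq_iInter :
    XInf = ⋂ (i : ℕ) (_ : 1 ≤ i),
      (fun x : ℕ → ℕ → ℕ → Bool => (x (i - 1), x i)) ⁻¹' {p | Linked p.1 p.2} := by
  ext x
  simp only [mem_iInter, mem_preimage, mem_ofPred_eq]
  rfl

theorem XSet_eq_iInter (n : ℕ) :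
    XSet n = ⋂ (i : ℕ) (_ : 1 ≤ i) (hn : i < n),
      (fun x : Fin n → ℕ → ℕ → Bool => (x ⟨i - 1, by omega⟩, x ⟨i, hn⟩)) ⁻¹'
        {p | Linked p.1 p.2} := by
  ext x
  simp only [mem_iInter, mem_preimage, mem_ofPred_eq]
  rfl

theorem isGδ_setOf_linked :
    IsGδ {p : (ℕ → ℕ → Bool) × (ℕ → ℕ → Bool) | Linked p.1 p.2} := by
  have hcont : ∀ k m, Continuous fun p : (ℕ → ℕ → Bool) × (ℕ → ℕ → Bool) => p.2 k m :=
    fun k m => by fun_prop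
  have hentry : ∀ k m, IsOpen {p : (ℕ → ℕ → Bool) × (ℕ → ℕ → Bool) | p.2 k m = true} :=
    fun k m => (hcont k m).isOpen_preimage _ (isOpen_discrete {true})
  have hsame : ∀ k l₁ l₂,
      IsOpen {p : (ℕ → ℕ → Bool) × (ℕ → ℕ → Bool) | p.2 k l₁ = p.2 k l₂} :=
    fun k l₁ l₂ => ((hcont k l₁).prodMk (hcont k l₂)).isOpen_preimage
      {b : Bool × Bool | b.1 = b.2} (isOpen_discrete _)
  have hdiff : ∀ l₁ l₂,
      IsOpen {p : (ℕ → ℕ → Bool) × (ℕ → ℕ → Bool) | ¬p.1 l₁ = p.1 l₂} :=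
    fun l₁ l₂ => (isClosed_eq (by fun_prop) (by fun_prop)).isOpen_compl
  simp only [Linked, ofPred_and, ofPred_forall, ofPred_exists, imp_iff_not_or, ofPred_or]
  exact ((IsGδ.iInter_of_isOpen fun m => isOpen_iUnion fun k => hentry k m).inter
    ((IsGδ.iInter_of_isOpen fun k => isOpen_iUnion fun m => hentry k m).inter
      (.iInter fun k => .iInter fun l₁ =>
        .iInter_of_isOpen fun l₂ => (hdiff l₁ l₂).union (hsame k l₁ l₂))))

theorem isGδ_XInf : IsGδ XInf := by
  rw [XInf_eq_iInter]
  exact .iInter fun _ => .iInter fun _ => isGδ_setOf_linked.preimage (by fun_prop)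

theorem isGδ_XSet (n : ℕ) : IsGδ (XSet n) := by
  rw [XSet_eq_iInter]
  exact .iInter fun _ => .iInter fun _ => .iInter fun _ =>
    isGδ_setOf_linked.preimage (by fun_prop)

/-- Outside `[0, N)²` the `1`s are the columns `m < N` and the entry `(k, N + k)` of each
row `k`; the latter makes the rows pairwise distinct. -/
def pad (N : ℕ) (g : ℕ → ℕ → Bool) : ℕ → ℕ → Bool :=
  fun k m => if k < N ∧ m < N then g k m else decide (m < N ∨ m = N + k)

theorem pad_of_lt {N : ℕ} (g : ℕ → ℕ → Bool) {k m : ℕ} (hk : k < N) (hm : m < N) :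
    pad N g k m = g k m :=
  if_pos ⟨hk, hm⟩

theorem pad_add_self (N : ℕ) (g : ℕ → ℕ → Bool) (k m : ℕ) :
    pad N g k (N + m) = decide (m = k) := by
  simp [pad]

theorem pad_injective (N : ℕ) (g : ℕ → ℕ → Bool) : Injective (pad N g) := by
  intro k₁ k₂ h
  simpa [pad_add_self] using congrFun h (N + k₁)

theorem linked_pad (N : ℕ) (f g : ℕ → ℕ → Bool) : Linked (pad N f) (pad N g) := by
  refine ⟨fun m => ?_, fun k => ⟨N + k, by simp [pad_add_self]⟩,
    fun k l₁ l₂ h => by rw [pad_injective N f h]⟩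
  rcases lt_or_ge m N with hm | hm
  · exact ⟨N, by simp [pad, hm]⟩
  · obtain ⟨j, rfl⟩ := Nat.exists_eq_add_of_le hm
    exact ⟨j, by simp [pad_add_self]⟩

theorem tendsto_pad (g : ℕ → ℕ → Bool) : Tendsto (fun N => pad N g) atTop (𝓝 g) := by
  refine tendsto_pi_nhds.2 fun k => tendsto_pi_nhds.2 fun m => tendsto_const_nhds.congr' ?_
  filter_upwards [eventually_gt_atTop (max k m)] with N hN
  exact (pad_of_lt g (by omega) (by omega)).symm

theorem dense_of_forall_pad_mem {ι : Type*} {S : Set (ι → ℕ → ℕ → Bool)}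
    (h : ∀ N (x : ι → ℕ → ℕ → Bool), (fun i => pad N (x i)) ∈ S) : Dense S := fun x =>
  mem_closure_of_tendsto (tendsto_pi_nhds.2 fun i => tendsto_pad (x i))
    (Eventually.of_forall fun N => h N x)

theorem dense_XInf : Dense XInf :=
  dense_of_forall_pad_mem fun N x i _ => linked_pad N (x (i - 1)) (x i)

theorem dense_XSet (n : ℕ) : Dense (XSet n) :=
  dense_of_forall_pad_mem fun N _ _ _ _ => linked_pad N _ _

/-- for `2 ≤ n ≤ ω`, the set `X_n` is a dense `G_δ` subset of
`((2^ℕ)^ℕ)^n`. -/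
theorem XSet_dense_Gdelta :
    (∀ n : ℕ, 2 ≤ n → IsGδ (XSet n) ∧ Dense (XSet n)) ∧
    (IsGδ XInf ∧ Dense XInf) :=
  ⟨fun n _ => ⟨isGδ_XSet n, dense_XSet n⟩, isGδ_XInf, dense_XInf⟩
end

section
/- For every finite n ≥ 1, the equivalence relation F_n is a Π^0_{n+2} subset of the space X_n × X_n (where X_n carries the subspace topology from ((2^ℕ)^ℕ)^n and X_n × X_n the product topology). -/
open MeasureTheory

/-- `SigmaPointclass α m` is the pointclass `Σ^0_{m+1}` on the space `α`:
`Σ^0_1` is the open sets, and `Σ^0_{m+2}` consists of countable unions of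
complements of `Σ^0_{m+1}` sets. -/
def SigmaPointclass (α : Type*) [TopologicalSpace α] : ℕ → Set (Set α)
  | 0 => {s | IsOpen s}
  | m + 1 => {s | ∃ f : ℕ → Set α, (∀ k, (f k)ᶜ ∈ SigmaPointclass α m) ∧ s = ⋃ k, f k}

/-- `PiPointclass α m` is the pointclass `Π^0_{m+1}`, the complements of
`Σ^0_{m+1}` sets. -/
def PiPointclass (α : Type*) [TopologicalSpace α] (m : ℕ) : Set (Set α) :=
  {s | sᶜ ∈ SigmaPointclass α m}

/-!
`A^x_{m+1}` is the range of the level-`m` codes `code x m`, so `F_n` is equality of these ranges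
at level `n - 1`. Unfolded naively, equality of two codes of level `m` costs two quantifiers per
level. On `X_n`, however, membership in a coded set depends only on the code of the element
(condition (3)), so once the ranges agree below level `m`, two codes of level `m + 1` are equal iff
their sets agree on every pair of elements with equal codes: one universal quantifier per level,
which makes equality of codes of level `m` a `Π^0_{m+1}` condition (`CodeEq`). Equality of the
ranges at one level forces it at all lower levels (condition (1)), so `F_n` is the conjunction over
`m ≤ n - 1` of the `∀∃` descriptions of the range equality at level `m`, each `Π^0_{m+3}`.
-/

open Set

theorem image_eq_image_iff_of_range_eq {ι κ T : Type*} {f : ι → T} {g : κ → T}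
    (hfg : range f = range g) {s : Set ι} {t : Set κ}
    (hs : ∀ i i', f i = f i' → i ∈ s → i' ∈ s) (ht : ∀ j j', g j = g j' → j ∈ t → j' ∈ t) :
    f '' s = g '' t ↔ ∀ i j, f i = g j → (i ∈ s ↔ j ∈ t) := by
  constructor
  · intro h i j hij
    constructor
    · intro hi
      obtain ⟨j', hj', hj'i⟩ : f i ∈ g '' t := h ▸ mem_image_of_mem f hi
      exact ht j' j (hj'i.trans hij) hj'
    · intro hj
      obtain ⟨i', hi', hi'j⟩ : g j ∈ f '' s := h ▸ mem_image_of_mem g hj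
      exact hs i' i (hi'j.trans hij.symm) hi'
  · intro h
    apply Subset.antisymm
    · rintro _ ⟨i, hi, rfl⟩
      obtain ⟨j, hj⟩ : f i ∈ range g := hfg ▸ mem_range_self i
      exact ⟨j, (h i j hj.symm).1 hi, hj⟩
    · rintro _ ⟨j, hj, rfl⟩
      obtain ⟨i, hi⟩ : g j ∈ range f := hfg ▸ mem_range_self j
      exact ⟨i, (h i j hi).2 hj, hi⟩

theorem range_eq_range_iff {ι κ T : Type*} {f : ι → T} {g : κ → T} :
    range f = range g ↔ (∀ i, ∃ j, f i = g j) ∧ ∀ j, ∃ i, f i = g j := by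
  simp only [Subset.antisymm_iff, range_subset_iff, mem_range, eq_comm]

section Pointclass

variable {α : Type*} [TopologicalSpace α] {m : ℕ} {s t : Set α}

theorem IsClopen.mem_sigmaPointclass (hs : IsClopen s) (m : ℕ) : s ∈ SigmaPointclass α m := by
  induction m generalizing s with
  | zero => exact hs.isOpen
  | succ m ih => exact ⟨fun _ => s, fun _ => ih hs.compl, (iUnion_const s).symm⟩

theorem IsClopen.mem_piPointclass (hs : IsClopen s) (m : ℕ) : s ∈ PiPointclass α m :=
  hs.compl.mem_sigmaPointclass m

theorem compl_mem_piPointclass_iff : sᶜ ∈ PiPointclass α m ↔ s ∈ SigmaPointclass α m := by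
  rw [PiPointclass, mem_ofPred_eq, compl_compl]

theorem mem_sigmaPointclass_succ_of_mem_piPointclass (hs : s ∈ PiPointclass α m) :
    s ∈ SigmaPointclass α (m + 1) :=
  ⟨fun _ => s, fun _ => hs, (iUnion_const s).symm⟩

theorem mem_piPointclass_succ_of_mem_sigmaPointclass (hs : s ∈ SigmaPointclass α m) :
    s ∈ PiPointclass α (m + 1) :=
  mem_sigmaPointclass_succ_of_mem_piPointclass (compl_mem_piPointclass_iff.2 hs)

theorem iUnion_mem_sigmaPointclass {ι : Sort*} [Countable ι] {f : ι → Set α}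
    (hf : ∀ i, f i ∈ SigmaPointclass α m) : ⋃ i, f i ∈ SigmaPointclass α m := by
  cases m with
  | zero => exact isOpen_iUnion hf
  | succ m =>
    rcases isEmpty_or_nonempty ι with hι | hι
    · rw [iUnion_of_empty]
      exact isClopen_empty.mem_sigmaPointclass _
    obtain ⟨i⟩ := hι
    have : Nonempty (PSigma fun _ : ι => ℕ) := ⟨⟨i, 0⟩⟩
    choose g hg hfg using hf
    obtain ⟨e, he⟩ := exists_surjective_nat (PSigma fun _ : ι => ℕ)
    refine ⟨fun c => g (e c).1 (e c).2, fun c => hg _ _, ?_⟩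
    rw [he.iUnion_comp fun p => g p.1 p.2]
    exact (iUnion_congr hfg).trans (iSup_psigma' g)

theorem union_mem_sigmaPointclass (hs : s ∈ SigmaPointclass α m)
    (ht : t ∈ SigmaPointclass α m) : s ∪ t ∈ SigmaPointclass α m := by
  rw [union_eq_iUnion]
  exact iUnion_mem_sigmaPointclass fun b => by cases b <;> assumption

theorem iInter_mem_piPointclass {ι : Sort*} [Countable ι] {f : ι → Set α}
    (hf : ∀ i, f i ∈ PiPointclass α m) : ⋂ i, f i ∈ PiPointclass α m := by
  rw [PiPointclass, mem_ofPred_eq, compl_iInter]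
  exact iUnion_mem_sigmaPointclass hf

theorem inter_mem_piPointclass (hs : s ∈ PiPointclass α m) (ht : t ∈ PiPointclass α m) :
    s ∩ t ∈ PiPointclass α m := by
  rw [PiPointclass, mem_ofPred_eq, compl_inter]
  exact union_mem_sigmaPointclass hs ht

theorem setOf_forall_exists_mem_piPointclass {ι κ : Type*} [Countable ι] [Countable κ]
    {P : α → ι → κ → Prop} (h : ∀ i j, {p | P p i j} ∈ PiPointclass α m) :
    {p | ∀ i, ∃ j, P p i j} ∈ PiPointclass α (m + 2) := by
  simp only [ofPred_forall, ofPred_exists]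
  exact iInter_mem_piPointclass fun i => mem_piPointclass_succ_of_mem_sigmaPointclass <|
    iUnion_mem_sigmaPointclass fun j => mem_sigmaPointclass_succ_of_mem_piPointclass (h i j)

end Pointclass

theorem isClopen_setOf_eq {β γ : Type*} [TopologicalSpace β] [TopologicalSpace γ]
    [DiscreteTopology γ] {f g : β → γ} (hf : Continuous f) (hg : Continuous g) :
    IsClopen {p | f p = g p} :=
  (isClopen_discrete {q : γ × γ | q.1 = q.2}).preimage (hf.prodMk hg)

/-- `code x m k` is `x(0)(k)` for `m = 0` and `a^{x,k}_m` for `m ≥ 1`. -/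
def code (x : ℕ → ℕ → ℕ → Bool) : (m : ℕ) → ℕ → It m
  | 0 => x 0
  | m + 1 => aF x m

theorem aF_eq_image (x : ℕ → ℕ → ℕ → Bool) (m l : ℕ) :
    (aF x m l : Set (It m)) = code x m '' {k | x (m + 1) l k = true} := by
  cases m <;> exact Set.ext fun z => exists_congr fun k => and_congr Iff.rfl eq_comm

theorem AS_eq_range (x : ℕ → ℕ → ℕ → Bool) (m : ℕ) :
    (AS x m : Set (It m)) = range (code x m) := by
  cases m <;> exact Set.ext fun z => exists_congr fun k => eq_comm

section Codes

variable {x y : ℕ → ℕ → ℕ → Bool}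

def RespectsCode (x : ℕ → ℕ → ℕ → Bool) (m : ℕ) : Prop :=
  ∀ a b, code x m a = code x m b → ∀ k, x (m + 1) k a = x (m + 1) k b

theorem aF_eq_aF_iff {m : ℕ} (hxy : range (code x m) = range (code y m))
    (hx : RespectsCode x m) (hy : RespectsCode y m) {k l : ℕ} :
    aF x m k = aF y m l ↔ ∀ i j, code x m i = code y m j → x (m + 1) k i = y (m + 1) l j := by
  have hx' : ∀ i i', code x m i = code x m i' → x (m + 1) k i = true → x (m + 1) k i' = true :=
    fun i i' h hi => hx i i' h k ▸ hi
  have hy' : ∀ j j', code y m j = code y m j' → y (m + 1) l j = true → y (m + 1) l j' = true :=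
    fun j j' h hj => hy j j' h l ▸ hj
  have key := image_eq_image_iff_of_range_eq hxy (s := {i | x (m + 1) k i})
    (t := {j | y (m + 1) l j}) hx' hy'
  rw [← aF_eq_image, ← aF_eq_image] at key
  exact key.trans (forall₂_congr fun i j => imp_congr_right fun _ => Bool.eq_iff_iff.symm)

theorem RespectsCode.succ {m : ℕ} (hm : RespectsCode x m)
    (h : ∀ k a b, x (m + 1) a = x (m + 1) b → x (m + 2) k a = x (m + 2) k b) :
    RespectsCode x (m + 1) := by
  intro a b hab k
  refine h k a b (funext fun c => ?_)
  exact (aF_eq_aF_iff rfl hm hm).1 hab c c rfl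

theorem range_code_subset_of_succ {m : ℕ} (hx : ∀ a, ∃ k, x (m + 1) k a = true)
    (h : range (code x (m + 1)) ⊆ range (code y (m + 1))) :
    range (code x m) ⊆ range (code y m) := by
  rintro _ ⟨a, rfl⟩
  obtain ⟨k, hk⟩ := hx a
  obtain ⟨l, hl⟩ := h (mem_range_self k)
  have : code x m a ∈ code y m '' {j | y (m + 1) l j = true} := by
    change aF y m l = aF x m k at hl
    rw [← aF_eq_image, hl, aF_eq_image]
    exact mem_image_of_mem _ hk
  obtain ⟨j, -, hj⟩ := this
  exact ⟨j, hj⟩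

/-- Agrees with `code x m i = code y m j` as soon as `x` and `y` code the same sets below level
`m` (`codeEq_iff`), but costs only one universal quantifier per level. -/
def CodeEq (x y : ℕ → ℕ → ℕ → Bool) : ℕ → ℕ → ℕ → Prop
  | 0, i, j => x 0 i = y 0 j
  | m + 1, k, l => ∀ i j, CodeEq x y m i j → x (m + 1) k i = y (m + 1) l j

theorem codeEq_iff {m : ℕ} (hxy : ∀ i < m, range (code x i) = range (code y i))
    (hx : ∀ i < m, RespectsCode x i) (hy : ∀ i < m, RespectsCode y i) {k l : ℕ} :
    CodeEq x y m k l ↔ code x m k = code y m l := by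
  induction m generalizing k l with
  | zero => rfl
  | succ m ih =>
    have ih' : ∀ i j, CodeEq x y m i j ↔ code x m i = code y m j := fun i j =>
      ih (fun i hi => hxy i (by omega)) (fun i hi => hx i (by omega)) (fun i hi => hy i (by omega))
    simp only [CodeEq, ih']
    exact (aF_eq_aF_iff (hxy m m.lt_succ_self) (hx m m.lt_succ_self) (hy m m.lt_succ_self)).symm

theorem range_code_eq_iff {N : ℕ} (hcx : ∀ m < N, ∀ a, ∃ k, x (m + 1) k a = true)
    (hcy : ∀ m < N, ∀ a, ∃ k, y (m + 1) k a = true)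
    (hx : ∀ m < N, RespectsCode x m) (hy : ∀ m < N, RespectsCode y m) :
    range (code x N) = range (code y N) ↔
      ∀ m ≤ N, (∀ k, ∃ l, CodeEq x y m k l) ∧ ∀ l, ∃ k, CodeEq x y m k l := by
  have step : ∀ m ≤ N, (∀ i < m, range (code x i) = range (code y i)) →
      (range (code x m) = range (code y m) ↔
        (∀ k, ∃ l, CodeEq x y m k l) ∧ ∀ l, ∃ k, CodeEq x y m k l) := fun m hm hlt => by
    simp only [range_eq_range_iff,
      codeEq_iff hlt (fun i hi => hx i (by omega)) (fun i hi => hy i (by omega))]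
  constructor
  · intro h
    have below : ∀ m ≤ N, range (code x m) = range (code y m) := fun m hm =>
      Nat.decreasingInduction (fun k hk ih =>
        (range_code_subset_of_succ (hcx k hk) ih.le).antisymm
          (range_code_subset_of_succ (hcy k hk) ih.ge)) h hm
    exact fun m hm => (step m hm fun i hi => below i (by omega)).1 (below m hm)
  · intro h
    have upto : ∀ m ≤ N, range (code x m) = range (code y m) := by
      intro m
      induction m using Nat.strong_induction_on with
      | _ m ih => exact fun hm => (step m hm fun i hi => ih i hi (by omega)).2 (h m hm)
    exact upto N le_rfl

end Codes

/-- Stated for all `t ≥ m` because the hierarchy need not increase in a general space; the basic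
sets here are clopen, which lie in every level. -/
theorem setOf_codeEq_mem_piPointclass {β : Type*} [TopologicalSpace β]
    {x y : β → ℕ → ℕ → ℕ → Bool} (hx : ∀ i k a, Continuous fun p => x p i k a)
    (hy : ∀ i k a, Continuous fun p => y p i k a) {m t : ℕ} (hmt : m ≤ t) (k l : ℕ) :
    {p | CodeEq (x p) (y p) m k l} ∈ PiPointclass β t := by
  induction m generalizing t k l with
  | zero =>
    have : {p | CodeEq (x p) (y p) 0 k l} = ⋂ a, {p | x p 0 k a = y p 0 l a} := by
      ext p
      simp [CodeEq, funext_iff]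
    rw [this]
    exact iInter_mem_piPointclass fun a =>
      (isClopen_setOf_eq (hx 0 k a) (hy 0 l a)).mem_piPointclass t
  | succ m ih =>
    obtain ⟨t, rfl⟩ : ∃ t', t = t' + 1 := ⟨t - 1, by omega⟩
    have : {p | CodeEq (x p) (y p) (m + 1) k l} = ⋂ i, ⋂ j,
        ({p | CodeEq (x p) (y p) m i j}ᶜ ∪ {p | x p (m + 1) k i = y p (m + 1) l j}) := by
      ext p
      simp only [CodeEq, mem_iInter, mem_union, mem_compl_iff, mem_ofPred_eq, imp_iff_not_or]
    rw [this]
    refine iInter_mem_piPointclass fun i => iInter_mem_piPointclass fun j =>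
      mem_piPointclass_succ_of_mem_sigmaPointclass (union_mem_sigmaPointclass ?_ ?_)
    · exact ih (by omega) i j
    · exact (isClopen_setOf_eq (hx _ k i) (hy _ l j)).mem_sigmaPointclass t

theorem continuous_extFin_apply {n : ℕ} (i k a : ℕ) :
    Continuous fun x : Fin n → ℕ → ℕ → Bool => extFin x i k a := by
  by_cases h : i < n
  · simp only [extFin, dif_pos h]
    fun_prop
  · simp only [extFin, dif_neg h]
    exact continuous_const

section XSet

variable {n : ℕ} {x y : Fin n → ℕ → ℕ → Bool}

theorem extFin_of_lt (x : Fin n → ℕ → ℕ → Bool) {i : ℕ} (h : i < n) : extFin x i = x ⟨i, h⟩ :=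
  dif_pos h

theorem extFin_covers_of_mem_XSet (hx : x ∈ XSet n) {m : ℕ} (hm : m + 1 < n) (a : ℕ) :
    ∃ k, extFin x (m + 1) k a = true := by
  rw [extFin_of_lt x hm]
  exact (hx (m + 1) (by omega) hm).1 a

theorem respectsCode_extFin_of_mem_XSet (hx : x ∈ XSet n) {m : ℕ} (hm : m + 1 < n) :
    RespectsCode (extFin x) m := by
  have level : ∀ i, i + 1 < n → ∀ k a b, extFin x i a = extFin x i b →
      extFin x (i + 1) k a = extFin x (i + 1) k b := by
    intro i hi
    rw [extFin_of_lt x hi, extFin_of_lt x (by omega : i < n)]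
    exact (hx (i + 1) (by omega) hi).2.2
  induction m with
  | zero => exact fun a b h k => level 0 hm k a b h
  | succ m ih => exact (ih (by omega)).succ (level (m + 1) hm)

theorem Ffin_iff (hx : x ∈ XSet n) (hy : y ∈ XSet n) :
    Ffin n x y ↔ ∀ m ≤ n - 1, (∀ k, ∃ l, CodeEq (extFin x) (extFin y) m k l) ∧
      ∀ l, ∃ k, CodeEq (extFin x) (extFin y) m k l := by
  rw [← range_code_eq_iff (fun m hm => extFin_covers_of_mem_XSet hx (by omega))
    (fun m hm => extFin_covers_of_mem_XSet hy (by omega))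
    (fun m hm => respectsCode_extFin_of_mem_XSet hx (by omega))
    (fun m hm => respectsCode_extFin_of_mem_XSet hy (by omega)), ← AS_eq_range, ← AS_eq_range]
  rfl

end XSet

/-- `F_n` is a `Π^0_{n+2}` subset of `X_n × X_n`. -/
theorem Ffin_Pi0_nplus2 (n : ℕ) (hn : 1 ≤ n) :
    {p : ↥(XSet n) × ↥(XSet n) | Ffin n p.1.1 p.2.1} ∈
      PiPointclass (↥(XSet n) × ↥(XSet n)) (n + 1) := by
  obtain ⟨N, rfl⟩ : ∃ N, n = N + 1 := ⟨n - 1, by omega⟩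
  have hcode : ∀ m ≤ N, ∀ k l, {p : XSet (N + 1) × XSet (N + 1) |
      CodeEq (extFin p.1.1) (extFin p.2.1) m k l} ∈ PiPointclass _ N := fun m hm =>
    setOf_codeEq_mem_piPointclass
      (fun i k a => (continuous_extFin_apply i k a).comp
        (continuous_subtype_val.comp continuous_fst))
      (fun i k a => (continuous_extFin_apply i k a).comp
        (continuous_subtype_val.comp continuous_snd)) hm
  have hset : {p : XSet (N + 1) × XSet (N + 1) | Ffin (N + 1) p.1.1 p.2.1} =
      ⋂ m, ⋂ (_ : m ≤ N),
        {p | ∀ k, ∃ l, CodeEq (extFin p.1.1) (extFin p.2.1) m k l} ∩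
        {p | ∀ l, ∃ k, CodeEq (extFin p.1.1) (extFin p.2.1) m k l} := by
    ext p
    simp only [mem_ofPred_eq, mem_iInter, mem_inter_iff, Ffin_iff p.1.2 p.2.2,
      Nat.add_sub_cancel]
  rw [hset]
  exact iInter_mem_piPointclass fun m => iInter_mem_piPointclass fun hm =>
    inter_mem_piPointclass (setOf_forall_exists_mem_piPointclass (hcode m hm))
      (setOf_forall_exists_mem_piPointclass fun l k => hcode m hm k l)
end

section
/- There is a comeager set of functions α ∈ 2^{(2^{<ℕ})^{<ℕ} × ℕ × ℕ} (with the product topology) such that for all x, y ∈ (2^ℕ)^ℕ with x separated and y injective and separated, the following hold for γ = γ_α and N = ℕ^{<ℕ} × ℕ: (i) for every finite partial function τ : N → 2 there are infinitely many (t,k) ∈ N such that the function (s,d) ↦ γ(y)(t,k)(s,d) extends τ; (ii) for all finite partial functions τ_1 : N → 2 and τ_2 : N → 2 there are infinitely many (s,d) ∈ N such that the function (t,k) ↦ γ(y)(t,k)(s,d) extends τ_1 and the function (t,k) ↦ γ(x)(s,d)(t,k) extends τ_2. -/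
open MeasureTheory

/-- The countable index set `N = ℕ^{<ℕ} × ℕ`. -/
abbrev NIdx : Type := List ℕ × ℕ

/-- The map `γ_α : (2^ℕ)^ℕ → (2^N)^N` determined by
`α : (2^{<ℕ})^{<ℕ} × ℕ × ℕ → 2`, namely
`γ_α(x)(t,k)(s,d) = α(x(t₁)∘s, …, x(t_r)∘s, d, k)`. -/
def gammaA (α : List (List Bool) × ℕ × ℕ → Bool) (x : ℕ → ℕ → Bool) :
    NIdx → NIdx → Bool :=
  fun tk sd => α (tk.1.map fun j => sd.1.map (x j), sd.2, tk.2)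

/-!
For a generic `α`, every finite pattern of values prescribed at keys `(u, k)`, simultaneously in the
form `α (u, d, k)` and `α (u, k, d)`, is realised at infinitely many positions `d`: only finitely
many values of `α` are fixed by a basic open set, and a fresh `d` can always be rewritten.

Entries of `γ_α` are values of `α` at keys `(x(t₁)∘s, …, x(t_r)∘s, ·)`. Since the sequences are
separated (and `y` is injective), a single finite list `t` (resp. `s`) already makes this encoding
injective on the finitely many entries involved, so a finite partial function on them becomes a
pattern of `α`, realised at infinitely many positions.
-/

open Set

section Patterns

variable {L : Type*}

def MatchesAt (α : L × ℕ × ℕ → Bool) (F₁ F₂ : Finset (L × ℕ)) (σ₁ σ₂ : L × ℕ → Bool)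
    (d : ℕ) : Prop :=
  (∀ e ∈ F₁, α (e.1, d, e.2) = σ₁ e) ∧ ∀ e ∈ F₂, α (e.1, e.2, d) = σ₂ e

def RealizesPatterns (α : L × ℕ × ℕ → Bool) : Prop :=
  ∀ (F₁ F₂ : Finset (L × ℕ)) (σ₁ σ₂ : L × ℕ → Bool), {d | MatchesAt α F₁ F₂ σ₁ σ₂ d}.Infinite

theorem isOpen_setOf_exists_matchesAt (n : ℕ) (F₁ F₂ : Finset (L × ℕ)) (σ₁ σ₂ : L × ℕ → Bool) :
    IsOpen {α | ∃ d ≥ n, MatchesAt α F₁ F₂ σ₁ σ₂ d} := by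
  have hcyl (c : L × ℕ × ℕ) (b : Bool) : IsOpen {α : L × ℕ × ℕ → Bool | α c = b} :=
    (isOpen_discrete {b}).preimage
      (continuous_apply c : Continuous fun α : L × ℕ × ℕ → Bool => α c)
  have : {α | ∃ d ≥ n, MatchesAt α F₁ F₂ σ₁ σ₂ d} = ⋃ d ≥ n,
      (⋂ e ∈ F₁, {α | α (e.1, d, e.2) = σ₁ e}) ∩ ⋂ e ∈ F₂, {α | α (e.1, e.2, d) = σ₂ e} := by
    ext
    simp only [MatchesAt, mem_ofPred_eq, mem_iUnion, mem_inter_iff, mem_iInter, exists_prop]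
  rw [this]
  exact isOpen_biUnion fun d _ =>
    (isOpen_biInter_finset fun e _ => hcyl _ _).inter (isOpen_biInter_finset fun e _ => hcyl _ _)

theorem dense_of_forall_exists_eqOn {ι : Type*} {A : ι → Type*} [∀ i, TopologicalSpace (A i)]
    {s : Set (∀ i, A i)} (h : ∀ (f : ∀ i, A i) (I : Finset ι), ∃ g ∈ s, ∀ i ∈ I, g i = f i) :
    Dense s := by
  refine dense_iff_inter_open.2 fun U hU ⟨f, hf⟩ => ?_
  obtain ⟨I, u, hfu, hIU⟩ := isOpen_pi_iff.1 hU f hf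
  obtain ⟨g, hg, hgf⟩ := h f I
  exact ⟨g, hIU fun i hi => (hgf i hi).symm ▸ (hfu i hi).2, hg⟩

theorem dense_setOf_exists_matchesAt (n : ℕ) (F₁ F₂ : Finset (L × ℕ)) (σ₁ σ₂ : L × ℕ → Bool) :
    Dense {α | ∃ d ≥ n, MatchesAt α F₁ F₂ σ₁ σ₂ d} := by
  classical
  refine dense_of_forall_exists_eqOn fun α₀ I => ?_
  let B : Finset ℕ := I.image (·.2.1) ∪ I.image (·.2.2) ∪ F₂.image Prod.snd
  obtain ⟨d, hdn, hdB⟩ := ((Ici_infinite n).sdiff B.finite_toSet).nonempty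
  simp only [B, Finset.coe_union, Finset.coe_image, mem_union, mem_image, Finset.mem_coe,
    not_or, not_exists, not_and] at hdB
  refine ⟨fun c => if c.2.1 = d then σ₁ (c.1, c.2.2) else if c.2.2 = d then σ₂ (c.1, c.2.1)
    else α₀ c, ⟨d, hdn, fun e _ => if_pos rfl, fun e he => ?_⟩, fun c hc => ?_⟩
  · dsimp only
    rw [if_neg (hdB.2 e he), if_pos rfl]
  · dsimp only
    rw [if_neg (hdB.1.1 c hc), if_neg (hdB.1.2 c hc)]

theorem setOf_realizesPatterns_mem_residual [Countable L] :
    {α : L × ℕ × ℕ → Bool | RealizesPatterns α} ∈ residual (L × ℕ × ℕ → Bool) := by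
  classical
  -- Only the values of `σᵢ` on `Fᵢ` matter, so `σᵢ` may be taken to be the indicator of a finset:
  -- countably many conditions.
  let S : Finset (L × ℕ) × Finset (L × ℕ) × Finset (L × ℕ) × Finset (L × ℕ) × ℕ →
      Set (L × ℕ × ℕ → Bool) := fun ⟨F₁, F₂, S₁, S₂, n⟩ =>
    {α | ∃ d ≥ n, MatchesAt α F₁ F₂ (fun e => decide (e ∈ S₁)) (fun e => decide (e ∈ S₂)) d}
  have hS : ∀ i, S i ∈ residual _ := fun _ => residual_of_dense_open
    (isOpen_setOf_exists_matchesAt _ _ _ _ _) (dense_setOf_exists_matchesAt _ _ _ _ _)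
  refine Filter.mem_of_superset (countable_iInter_mem.2 hS) ?_
  intro α hα F₁ F₂ σ₁ σ₂
  refine Nat.frequently_atTop_iff_infinite.1 (Filter.frequently_atTop.2 fun n => ?_)
  obtain ⟨d, hdn, h₁, h₂⟩ :=
    mem_iInter.1 hα (F₁, F₂, F₁.filter (σ₁ · = true), F₂.filter (σ₂ · = true), n)
  exact ⟨d, hdn, fun e he => by simpa [he] using h₁ e he, fun e he => by simpa [he] using h₂ e he⟩

theorem RealizesPatterns.infinite_of_injOn {α : L × ℕ × ℕ → Bool} (hα : RealizesPatterns α)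
    {P : Type*} [Nonempty P] {key₁ key₂ : P → L × ℕ} {T₁ T₂ : Finset P}
    (h₁ : InjOn key₁ T₁) (h₂ : InjOn key₂ T₂) (τ₁ τ₂ : P → Bool) :
    {d | (∀ p ∈ T₁, α ((key₁ p).1, d, (key₁ p).2) = τ₁ p) ∧
      ∀ p ∈ T₂, α ((key₂ p).1, (key₂ p).2, d) = τ₂ p}.Infinite := by
  classical
  refine (hα (T₁.image key₁) (T₂.image key₂) (τ₁ ∘ Function.invFunOn key₁ T₁)
    (τ₂ ∘ Function.invFunOn key₂ T₂)).mono fun d hd => ⟨fun p hp => ?_, fun p hp => ?_⟩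
  · rw [hd.1 _ (Finset.mem_image_of_mem _ hp), Function.comp_apply, h₁.leftInvOn_invFunOn hp]
  · rw [hd.2 _ (Finset.mem_image_of_mem _ hp), Function.comp_apply, h₂.leftInvOn_invFunOn hp]

end Patterns

section Separation

variable {ι α β : Type*}

theorem exists_finset_forall_injOn_map {f : ι → α → β}
    (hf : ∀ a b, a ≠ b → ∃ i, f i a ≠ f i b) {E : Set α} (hE : E.Finite) :
    ∃ I : Finset ι, ∀ t : List ι, (∀ i ∈ I, i ∈ t) → InjOn (fun a => t.map (f · a)) E := by
  classical
  choose g hg using fun p : {p : α × α // p.1 ≠ p.2} => hf p.1.1 p.1.2 p.2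
  refine ⟨(hE.offDiag.toFinset.subtype _).image g, fun t ht a ha b hb hab => ?_⟩
  by_contra hne
  have hi := ht (g ⟨(a, b), hne⟩) (Finset.mem_image_of_mem g (by simp [ha, hb, hne]))
  exact hg ⟨(a, b), hne⟩ (List.map_inj_left.1 hab _ hi)

theorem List.injOn_map {f : α → β} {E : Set α} (hf : InjOn f E) :
    InjOn (List.map f) {l | ∀ a ∈ l, a ∈ E} := by
  intro l hl l' hl' h
  induction l generalizing l' with
  | nil => exact (List.map_eq_nil_iff.1 h.symm).symm
  | cons a l ih =>
    obtain _ | ⟨b, l'⟩ := l'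
    · exact absurd h (List.cons_ne_nil _ _)
    simp only [List.map_cons, List.cons.injEq] at h
    simp only [mem_ofPred_eq, List.mem_cons, forall_eq_or_imp] at hl hl'
    rw [hf hl.1 hl'.1 h.1, ih hl.2 hl'.2 h.2]

/-- The rows `l.map (f i)`, `i ∈ t`, determine the columns `t.map (f · a)`, `a ∈ l`, as long as
there is at least one row. -/
theorem injOn_map_map_of_ne_nil {f : ι → α → β} {t : List ι} (ht : t ≠ []) {E : Set α}
    (hE : InjOn (fun a => t.map (f · a)) E) :
    InjOn (fun l : List α => t.map fun i => l.map (f i)) {l | ∀ a ∈ l, a ∈ E} := by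
  intro l hl l' hl' h
  have hrow : ∀ i ∈ t, l.map (f i) = l'.map (f i) := List.map_inj_left.1 h
  obtain ⟨i₀, hi₀⟩ := List.exists_mem_of_ne_nil t ht
  have hlen : l.length = l'.length := by simpa using congrArg List.length (hrow i₀ hi₀)
  refine List.injOn_map hE hl hl' (List.ext_getElem (by simpa using hlen) fun m h₁ h₂ => ?_)
  simp only [List.getElem_map]
  refine List.map_inj_left.2 fun i hi => ?_
  have := List.getElem_of_eq (hrow i hi) (by simpa using h₁)
  rwa [List.getElem_map, List.getElem_map] at this

theorem exists_finite_forall_mem_fst {γ : Type*} (T : Finset (List ι × γ)) :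
    ∃ E : Set ι, E.Finite ∧ (T : Set (List ι × γ)) ⊆ {l | ∀ a ∈ l, a ∈ E} ×ˢ univ :=
  ⟨⋃ q ∈ T, {a | a ∈ q.1}, T.finite_toSet.biUnion fun q _ => q.1.finite_toSet,
    fun _ hq => ⟨fun _ ha => mem_biUnion hq ha, trivial⟩⟩

end Separation

section Gamma

variable {α : List (List Bool) × ℕ × ℕ → Bool}

theorem RealizesPatterns.infinite_setOf_gammaA_rows (hα : RealizesPatterns α)
    {y : ℕ → ℕ → Bool} (hy : SeqSeparated y) (T : Finset NIdx) (τ : NIdx → Bool) :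
    {p : NIdx | ∀ q ∈ T, gammaA α y p q = τ q}.Infinite := by
  obtain ⟨E, hE, hTE⟩ := exists_finite_forall_mem_fst T
  obtain ⟨I, hI⟩ := exists_finset_forall_injOn_map hy hE
  let t := 0 :: I.toList
  have ht : InjOn (fun l : List ℕ => t.map fun j => l.map (y j)) {l | ∀ a ∈ l, a ∈ E} :=
    injOn_map_map_of_ne_nil (List.cons_ne_nil _ _) (hI t fun i hi => by simp [t, hi])
  have hkey := (ht.prodMap (injOn_id _)).mono hTE
  refine ((hα.infinite_of_injOn (T₁ := ∅) (hkey.mono (by simp)) hkey τ τ).image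
    (Prod.mk_right_injective t).injOn).mono ?_
  rintro _ ⟨k, ⟨-, hk⟩, rfl⟩
  exact hk

theorem RealizesPatterns.infinite_setOf_gammaA_columns (hα : RealizesPatterns α)
    {x y : ℕ → ℕ → Bool} (hx : SeqSeparated x) (hy : Function.Injective y)
    (T₁ T₂ : Finset NIdx) (τ₁ τ₂ : NIdx → Bool) :
    {q : NIdx | (∀ p ∈ T₁, gammaA α y p q = τ₁ p) ∧ ∀ p ∈ T₂, gammaA α x q p = τ₂ p}.Infinite := by
  obtain ⟨E₁, hE₁, hTE₁⟩ := exists_finite_forall_mem_fst T₁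
  obtain ⟨E₂, hE₂, hTE₂⟩ := exists_finite_forall_mem_fst T₂
  obtain ⟨I₁, hI₁⟩ := exists_finset_forall_injOn_map (f := fun a j => y j a)
    (fun _ _ h => Function.ne_iff.1 (hy.ne h)) hE₁
  obtain ⟨I₂, hI₂⟩ := exists_finset_forall_injOn_map hx hE₂
  let s := 0 :: (I₁ ∪ I₂).toList
  have hs₁ : InjOn (List.map fun j => s.map (y j)) {l | ∀ a ∈ l, a ∈ E₁} :=
    List.injOn_map (hI₁ s fun i hi => by simp [s, hi])
  have hs₂ : InjOn (fun l : List ℕ => s.map fun j => l.map (x j)) {l | ∀ a ∈ l, a ∈ E₂} :=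
    injOn_map_map_of_ne_nil (List.cons_ne_nil _ _) (hI₂ s fun i hi => by simp [s, hi])
  refine ((hα.infinite_of_injOn ((hs₁.prodMap (injOn_id _)).mono hTE₁)
    ((hs₂.prodMap (injOn_id _)).mono hTE₂) τ₁ τ₂).image (Prod.mk_right_injective s).injOn).mono ?_
  rintro _ ⟨d, hd, rfl⟩
  exact hd

end Gamma

/-- for a comeager set of `α`, for every separated `x` and every
injective separated `y`, the pair `(γ_α(x), γ_α(y))` satisfies the genericity
conditions (2)(a) and (2)(b). -/
theorem gammaA_generic_conditions :
    ∃ A : Set (List (List Bool) × ℕ × ℕ → Bool),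
      A ∈ residual (List (List Bool) × ℕ × ℕ → Bool) ∧
      ∀ α ∈ A, ∀ x y : ℕ → ℕ → Bool,
        SeqSeparated x → Function.Injective y → SeqSeparated y →
        ((∀ (T : Finset NIdx) (τ : NIdx → Bool),
            {p : NIdx | ∀ q ∈ T, gammaA α y p q = τ q}.Infinite) ∧
         (∀ (T₁ T₂ : Finset NIdx) (τ₁ τ₂ : NIdx → Bool),
            {q : NIdx | (∀ p ∈ T₁, gammaA α y p q = τ₁ p) ∧
              (∀ p ∈ T₂, gammaA α x q p = τ₂ p)}.Infinite)) :=
  ⟨{α | RealizesPatterns α}, setOf_realizesPatterns_mem_residual,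
    fun _ hα _ _ hx hyinj hy =>
      ⟨hα.infinite_setOf_gammaA_rows hy, hα.infinite_setOf_gammaA_columns hx hyinj⟩⟩
end
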